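/- arXiv:1604.07615 — 9 statements merged into one kernel-verified Lean document; each statement's English description precedes it below -/
import Mathlib

section
/- For any two nonempty finite metric spaces X and Y there exists a correspondence R between X and Y that is simultaneously optimal (d_GH(X,Y) = (1/2) · dis R) and irreducible (minimal with respect to inclusion among all correspondences between X and Y). -/
/-- A correspondence between `X` and `Y` is a relation whose projections onto both
factors are surjective. -/
def IsCorrespondence {X Y : Type*} (R : Set (X × Y)) : Prop :=
  (∀ x : X, ∃ y : Y, (x, y) ∈ R) ∧ (∀ y : Y, ∃ x : X, (x, y) ∈ R)

/-- The distortion of a relation between two metric spaces. -/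
noncomputable def relDis {X Y : Type*} [MetricSpace X] [MetricSpace Y]
    (R : Set (X × Y)) : ℝ :=
  sSup {r : ℝ | ∃ p ∈ R, ∃ q ∈ R, r = |dist p.1 q.1 - dist p.2 q.2|}

/-- A correspondence is irreducible if it is minimal with respect to inclusion among
all correspondences. -/
def IsIrreducibleCorrespondence {X Y : Type*} (R : Set (X × Y)) : Prop :=
  IsCorrespondence R ∧ ∀ R' : Set (X × Y), R' ⊆ R → IsCorrespondence R' → R' = R

/-!
Gluing `X` and `Y` along a correspondence `R`, putting each pair `(x, y) ∈ R` at any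
distance `ε > dis R / 2`, shows `d_GH(X, Y) ≤ dis R / 2` for every correspondence;
conversely, the pairs at distance at most `d_GH(X, Y)` in an optimal Hausdorff embedding form
a correspondence of distortion at most `2 d_GH(X, Y)`. Every correspondence between finite
spaces contains an irreducible one, and shrinking a relation can only decrease its
distortion, so an irreducible correspondence inside the optimal one is still optimal.
-/

open Metric GromovHausdorff Set

namespace IsCorrespondence

variable {X Y : Type*} {R : Set (X × Y)}

theorem nonempty [Nonempty X] (hR : IsCorrespondence R) : R.Nonempty :=
  let ⟨_, hy⟩ := hR.1 (Classical.arbitrary X)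
  ⟨_, hy⟩

theorem exists_irreducible_subset [Finite X] [Finite Y] (hR : IsCorrespondence R) :
    ∃ R' ⊆ R, IsIrreducibleCorrespondence R' := by
  obtain ⟨R', hR'R, hmin⟩ := exists_minimal_le_of_wellFoundedLT IsCorrespondence R hR
  exact ⟨R', hR'R, hmin.1, fun S hSR' hS => hSR'.antisymm (hmin.2 hS hSR')⟩

end IsCorrespondence

section Distortion

variable {X Y : Type*} [MetricSpace X] [MetricSpace Y]

theorem bddAbove_distortions [BoundedSpace X] [BoundedSpace Y] (R : Set (X × Y)) :
    BddAbove {r : ℝ | ∃ p ∈ R, ∃ q ∈ R, r = |dist p.1 q.1 - dist p.2 q.2|} := by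
  refine ⟨diam (univ : Set X) + diam (univ : Set Y), ?_⟩
  rintro _ ⟨p, -, q, -, rfl⟩
  have hX := dist_le_diam_of_mem (Bornology.isBounded_univ.2 ‹BoundedSpace X›)
    (mem_univ p.1) (mem_univ q.1)
  have hY := dist_le_diam_of_mem (Bornology.isBounded_univ.2 ‹BoundedSpace Y›)
    (mem_univ p.2) (mem_univ q.2)
  rw [abs_le']
  constructor <;> linarith [dist_nonneg (x := p.1) (y := q.1), dist_nonneg (x := p.2) (y := q.2)]

variable [BoundedSpace X] [BoundedSpace Y]

theorem abs_dist_sub_dist_le_relDis {R : Set (X × Y)} {p q : X × Y}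
    (hp : p ∈ R) (hq : q ∈ R) :
    |dist p.1 q.1 - dist p.2 q.2| ≤ relDis R :=
  le_csSup (bddAbove_distortions R) ⟨p, hp, q, hq, rfl⟩

theorem relDis_nonneg {R : Set (X × Y)} (hR : R.Nonempty) : 0 ≤ relDis R :=
  let ⟨_, hp⟩ := hR
  (abs_nonneg _).trans (abs_dist_sub_dist_le_relDis hp hp)

theorem relDis_mono {R S : Set (X × Y)} (hR : R.Nonempty) (hRS : R ⊆ S) :
    relDis R ≤ relDis S := by
  obtain ⟨p, hp⟩ := hR
  refine csSup_le_csSup (bddAbove_distortions S) ⟨_, p, hp, p, hp, rfl⟩ ?_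
  rintro _ ⟨p, hp, q, hq, rfl⟩
  exact ⟨p, hRS hp, q, hRS hq, rfl⟩

end Distortion

section Compact

variable {X Y : Type} [MetricSpace X] [CompactSpace X] [Nonempty X]
  [MetricSpace Y] [CompactSpace Y] [Nonempty Y]

theorem ghDist_le_half_relDis {R : Set (X × Y)} (hR : IsCorrespondence R) :
    ghDist X Y ≤ (1 / 2) * relDis R := by
  have hRne := hR.nonempty
  have : Nonempty R := hRne.to_subtype
  refine le_of_forall_pos_le_add fun δ hδ => ?_
  set ε : ℝ := 1 / 2 * relDis R + δ with hεdef
  have hε : 0 < ε := by positivity [relDis_nonneg hRne]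
  have hdis : ∀ p q : R, |dist (p : X × Y).1 (q : X × Y).1 - dist (p : X × Y).2 (q : X × Y).2|
      ≤ 2 * ε := fun p q => by
    linarith [abs_dist_sub_dist_le_relDis p.2 q.2]
  let Φ : R → X := fun p => (p : X × Y).1
  let Ψ : R → Y := fun p => (p : X × Y).2
  let _ : MetricSpace (X ⊕ Y) := glueMetricApprox Φ Ψ ε hε hdis
  have hglued : ∀ p : R, dist (Sum.inl (Φ p) : X ⊕ Y) (Sum.inr (Ψ p)) = ε :=
    glueDist_glued_points Φ Ψ ε
  have hl : Isometry (Sum.inl : X → X ⊕ Y) := Isometry.of_dist_eq fun _ _ => rfl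
  have hr : Isometry (Sum.inr : Y → X ⊕ Y) := Isometry.of_dist_eq fun _ _ => rfl
  refine (ghDist_le_hausdorffDist hl hr).trans (hausdorffDist_le_of_mem_dist hε.le ?_ ?_)
  · rintro _ ⟨x, rfl⟩
    obtain ⟨y, hy⟩ := hR.1 x
    exact ⟨Sum.inr y, mem_range_self _, (hglued ⟨(x, y), hy⟩).le⟩
  · rintro _ ⟨y, rfl⟩
    obtain ⟨x, hx⟩ := hR.2 y
    exact ⟨Sum.inl x, mem_range_self _, (dist_comm _ _).trans_le (hglued ⟨(x, y), hx⟩).le⟩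

theorem exists_correspondence_relDis_le_two_mul_ghDist :
    ∃ R : Set (X × Y), IsCorrespondence R ∧ relDis R ≤ 2 * ghDist X Y := by
  set Φ := optimalGHInjl X Y
  set Ψ := optimalGHInjr X Y
  have hΦ : Isometry Φ := isometry_optimalGHInjl X Y
  have hΨ : Isometry Ψ := isometry_optimalGHInjr X Y
  have hΦc : IsCompact (range Φ) := isCompact_range hΦ.continuous
  have hΨc : IsCompact (range Ψ) := isCompact_range hΨ.continuous
  have hfin : hausdorffEDist (range Φ) (range Ψ) ≠ ⊤ :=
    hausdorffEDist_ne_top_of_nonempty_of_bounded (range_nonempty _) (range_nonempty _)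
      hΦc.isBounded hΨc.isBounded
  have hopt : hausdorffDist (range Φ) (range Ψ) = ghDist X Y := hausdorffDist_optimal
  have hleft : ∀ x : X, ∃ y : Y, dist (Φ x) (Ψ y) ≤ ghDist X Y := fun x => by
    obtain ⟨_, ⟨y, rfl⟩, hy⟩ := hΨc.exists_infDist_eq_dist (range_nonempty _) (Φ x)
    exact ⟨y, hy ▸ hopt ▸ infDist_le_hausdorffDist_of_mem (mem_range_self x) hfin⟩
  have hright : ∀ y : Y, ∃ x : X, dist (Φ x) (Ψ y) ≤ ghDist X Y := fun y => by
    obtain ⟨_, ⟨x, rfl⟩, hx⟩ := hΦc.exists_infDist_eq_dist (range_nonempty _) (Ψ y)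
    refine ⟨x, ?_⟩
    rw [dist_comm, ← hx, ← hopt, hausdorffDist_comm]
    exact infDist_le_hausdorffDist_of_mem (mem_range_self y) (by rwa [hausdorffEDist_comm])
  have hcorr : IsCorrespondence {p : X × Y | dist (Φ p.1) (Ψ p.2) ≤ ghDist X Y} :=
    ⟨hleft, hright⟩
  refine ⟨_, hcorr, csSup_le ?_ ?_⟩
  · obtain ⟨p, hp⟩ := hcorr.nonempty
    exact ⟨_, p, hp, p, hp, rfl⟩
  · rintro _ ⟨p, hp, q, hq, rfl⟩
    rw [← hΦ.dist_eq p.1 q.1, ← hΨ.dist_eq p.2 q.2, abs_le']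
    have := dist_triangle4 (Φ p.1) (Ψ p.2) (Ψ q.2) (Φ q.1)
    have := dist_triangle4 (Ψ p.2) (Φ p.1) (Φ q.1) (Ψ q.2)
    simp only [mem_ofPred_eq, dist_comm] at *
    constructor <;> linarith

end Compact

/-- Any two nonempty finite metric spaces admit a correspondence that is simultaneously
optimal and irreducible. -/
theorem exists_optimal_irreducible_correspondence
    (X Y : Type) [MetricSpace X] [Finite X] [Nonempty X]
    [MetricSpace Y] [Finite Y] [Nonempty Y] :
    ∃ R : Set (X × Y),
      GromovHausdorff.ghDist X Y = (1 / 2) * relDis R ∧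
      IsIrreducibleCorrespondence R := by
  obtain ⟨R₀, hR₀, hR₀dis⟩ :=
    exists_correspondence_relDis_le_two_mul_ghDist (X := X) (Y := Y)
  obtain ⟨R, hRR₀, hR⟩ := hR₀.exists_irreducible_subset
  refine ⟨R, (ghDist_le_half_relDis hR.1).antisymm ?_, hR⟩
  linarith [relDis_mono hR.1.nonempty hRR₀]
end

section
/- Let Δ₁ be the one-point metric space and Δ₂ the two-point metric space with distance 1 between its points. Then for every nonempty compact metric space X with d_GH(Δ₁, X) = 1/2 one has d_GH(Δ₂, X) ≤ 1/2; in particular, there is no nonempty compact metric space X with d_GH(Δ₁, X) = 1/2 and d_GH(Δ₂, X) = 2/3. Consequently, the isometric embedding of the two-point space {A, B} with |AB| = 1/2 into the Gromov–Hausdorff space sending A to Δ₁ and B to Δ₂ cannot be extended to an isometric embedding of the three-point metric space {A, B, C} with |AC| = 1/2 and |BC| = 2/3. -/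
/-- `Bool` as the two-point metric space with distance `1` between its two points,
obtained by inducing the metric along the injection `Bool → ℝ`, `true ↦ 1`, `false ↦ 0`. -/
noncomputable instance boolMetricSpace : MetricSpace Bool :=
  MetricSpace.induced (fun b => if b then (1 : ℝ) else 0)
    (fun a b h => by cases a <;> cases b <;> simp_all) inferInstance

lemma bool_dist (a b : Bool) :
    dist a b = dist (if a then (1:ℝ) else 0) (if b then (1:ℝ) else 0) := rfl

lemma bool_dist_self (a : Bool) : dist a a = 0 := by simp [bool_dist]

lemma bool_dist_ne {a b : Bool} (h : a ≠ b) : dist a b = 1 := by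
  cases a <;> cases b <;> simp_all [bool_dist, Real.dist_eq]

open GromovHausdorff Metric Set in
/-- main step -/
lemma key (X : Type) [MetricSpace X] [CompactSpace X] [Nonempty X]
    (hX : ghDist PUnit X = 1 / 2) : ghDist Bool X ≤ 1 / 2 := by
  classical
  obtain ⟨x₀⟩ := ‹Nonempty X›
  -- upper bound on distances in X
  have hle : ∀ x y : X, dist x y ≤ 1 := by
    obtain ⟨Φ, Ψ, Φisom, Ψisom, hD⟩ := ghDist_eq_hausdorffDist PUnit X
    rw [hX] at hD
    have hne : EMetric.hausdorffEdist (range Ψ) (range Φ) ≠ ⊤ :=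
      Metric.hausdorffEdist_ne_top_of_nonempty_of_bounded (range_nonempty _) (range_nonempty _)
        (isCompact_range Ψisom.continuous).isBounded (isCompact_range Φisom.continuous).isBounded
    have hrange : range Φ = {Φ PUnit.unit} := by
      ext z; constructor
      · rintro ⟨u, rfl⟩; simp
      · rintro rfl; exact mem_range_self _
    have key : ∀ x : X, dist (Ψ x) (Φ PUnit.unit) ≤ 1 / 2 := by
      intro x
      have h1 : infDist (Ψ x) (range Φ) ≤ hausdorffDist (range Ψ) (range Φ) :=
        infDist_le_hausdorffDist_of_mem (mem_range_self _) hne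
      have h2 : infDist (Ψ x) (range Φ) = dist (Ψ x) (Φ PUnit.unit) := by
        rw [hrange, infDist_singleton]
      have h3 : hausdorffDist (range Ψ) (range Φ) = 1/2 := by
        rw [hausdorffDist_comm]; exact hD.symm
      rw [h2, h3] at h1
      exact h1
    intro x y
    calc dist x y = dist (Ψ x) (Ψ y) := (Ψisom.dist_eq x y).symm
      _ ≤ dist (Ψ x) (Φ PUnit.unit) + dist (Φ PUnit.unit) (Ψ y) := dist_triangle _ _ _
      _ ≤ 1/2 + 1/2 := by
          have := key y
          have := key x
          rw [dist_comm (Φ PUnit.unit)]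
          linarith
      _ = 1 := by norm_num
  -- there is a point at distance ≥ 1/2 from x₀
  have hfar : ∃ x₁ : X, 1/2 ≤ dist x₁ x₀ := by
    by_contra h
    push_neg at h
    obtain ⟨xm, -, hxm⟩ := isCompact_univ.exists_isMaxOn ⟨x₀, mem_univ x₀⟩
      ((continuous_id.dist continuous_const).continuousOn (s := univ) :
        ContinuousOn (fun x : X => dist x x₀) univ)
    have hmax : ∀ x : X, dist x x₀ ≤ dist xm x₀ := fun x => hxm (mem_univ x)
    have hc : dist xm x₀ < 1/2 := h xm
    -- embed PUnit into X as {x₀}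
    have hΦ : Isometry (fun _ : PUnit => x₀) := fun a b => by
      simp [Subsingleton.elim a b]
    have h1 : ghDist PUnit X ≤ hausdorffDist (range fun _ : PUnit => x₀) (range (id : X → X)) :=
      ghDist_le_hausdorffDist hΦ isometry_id
    have h2 : hausdorffDist (range fun _ : PUnit => x₀) (range (id : X → X)) ≤ dist xm x₀ := by
      apply hausdorffDist_le_of_mem_dist (dist_nonneg)
      · rintro z ⟨u, rfl⟩
        exact ⟨x₀, mem_range_self _, by simpa using hmax x₀⟩
      · rintro z ⟨u, rfl⟩
        exact ⟨x₀, ⟨PUnit.unit, rfl⟩, by simpa using hmax u⟩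
    rw [hX] at h1
    linarith
  obtain ⟨x₁, hx₁⟩ := hfar
  -- the approximate correspondence
  set Φ : ↥(univ : Set X) → Bool := fun x => decide ((1:ℝ)/2 ≤ dist (x : X) x₀) with hΦdef
  have main : ghDist X Bool ≤ 0 + 1 / 2 + 0 := by
    apply ghDist_le_of_approx_subsets (s := (univ : Set X)) Φ (ε₂ := 1)
    · intro x; exact ⟨x, mem_univ x, by simp⟩
    · intro b
      cases b
      · refine ⟨⟨x₀, mem_univ x₀⟩, ?_⟩
        have : Φ ⟨x₀, mem_univ x₀⟩ = false := by simp [hΦdef]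
        rw [this, bool_dist_self]
      · refine ⟨⟨x₁, mem_univ x₁⟩, ?_⟩
        have : Φ ⟨x₁, mem_univ x₁⟩ = true := by simp [hΦdef]; linarith
        rw [this, bool_dist_self]
    · intro x y
      have hd : dist x y = dist (x : X) (y : X) := rfl
      by_cases h : Φ x = Φ y
      · rw [h, bool_dist_self, hd]
        have := dist_nonneg (x := (x:X)) (y := (y:X))
        have := hle x y
        rw [abs_le]; constructor <;> linarith
      · rw [bool_dist_ne h, hd]
        have := dist_nonneg (x := (x:X)) (y := (y:X))
        have := hle x y
        rw [abs_le]; constructor <;> linarith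
  have hsymm : ghDist Bool X = ghDist X Bool := by
    simp only [ghDist]; exact dist_comm _ _
  rw [hsymm]; linarith


/-- For every nonempty compact metric space `X` with `d_GH(Δ₁, X) = 1/2` one has
`d_GH(Δ₂, X) ≤ 1/2`; in particular no such `X` satisfies `d_GH(Δ₂, X) = 2/3`, and so
the isometric embedding `A ↦ Δ₁`, `B ↦ Δ₂` of the two-point space `{A, B}` with
`|AB| = 1/2` cannot be extended to the three-point space `{A, B, C}` with `|AC| = 1/2`,
`|BC| = 2/3`. -/
theorem strong_non_universality :
    (∀ (X : Type) [MetricSpace X] [CompactSpace X] [Nonempty X],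
        GromovHausdorff.ghDist PUnit X = 1 / 2 → GromovHausdorff.ghDist Bool X ≤ 1 / 2) ∧
    (¬ ∃ (X : Type) (_ : MetricSpace X) (_ : CompactSpace X) (_ : Nonempty X),
        GromovHausdorff.ghDist PUnit X = 1 / 2 ∧ GromovHausdorff.ghDist Bool X = 2 / 3) ∧
    (¬ ∃ C : GromovHausdorff.GHSpace,
        dist (GromovHausdorff.toGHSpace PUnit) C = 1 / 2 ∧
        dist (GromovHausdorff.toGHSpace Bool) C = 2 / 3) := by
  refine ⟨fun X _ _ _ h => key X h, ?_, ?_⟩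
  · rintro ⟨X, _, _, _, h1, h2⟩
    have := key X h1
    rw [h2] at this
    norm_num at this
  · rintro ⟨C, h1, h2⟩
    have hC : GromovHausdorff.toGHSpace C.Rep = C := C.toGHSpace_rep
    have h1' : GromovHausdorff.ghDist PUnit C.Rep = 1 / 2 := by
      rw [GromovHausdorff.ghDist, hC]; exact h1
    have h2' : GromovHausdorff.ghDist Bool C.Rep = 2 / 3 := by
      rw [GromovHausdorff.ghDist, hC]; exact h2
    have := key C.Rep h1'
    rw [h2'] at this
    norm_num at this
end

section
/- Let X and Y be metric spaces, each with exactly n points (n ≥ 2), and suppose there exists a structural isomorphism f : X → Y. Then d_GH(X,Y) ≤ ‖ν(X) − ν(Y)‖_∞. -/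
open scoped Classical

/-- The list of half-distances between unordered pairs of distinct points of a finite
metric space, arranged in ascending order: the vector `ν(X) ∈ ℝ^{n(n-1)/2}_∞`. -/
noncomputable def nuList (X : Type*) [MetricSpace X] [Fintype X] : List ℝ :=
  ((Finset.univ.filter fun p : Sym2 X => ¬ p.IsDiag).val.map
    (Sym2.lift ⟨fun x y => dist x y / 2, fun x y => by simp [dist_comm]⟩)).sort (· ≤ ·)

/-- The `ℓ^∞` distance `‖ν(X) − ν(Y)‖_∞` between two vectors given as lists
(the maximum of coordinatewise absolute differences). -/
noncomputable def supDist (l₁ l₂ : List ℝ) : ℝ :=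
  (List.zipWith (fun a b => |a - b|) l₁ l₂).foldr max 0

/-- The quantity `δ(X)`: for a space with at most two points, the distance between the
two points (i.e. the diameter); otherwise the least of the minimal triangle-inequality
defect and the minimal difference of distances of essentially distinct pairs. -/
noncomputable def deltaX (X : Type*) [MetricSpace X] [Fintype X] : ℝ :=
  if Fintype.card X ≤ 2 then Metric.diam (Set.univ : Set X)
  else
    min
      (sInf {r : ℝ | ∃ x y z : X, x ≠ y ∧ y ≠ z ∧ x ≠ z ∧ r = dist x y + dist y z - dist x z})
      (sInf {r : ℝ | ∃ x y p q : X, x ≠ y ∧ p ≠ q ∧ 3 ≤ ({x, y, p, q} : Set X).ncard ∧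
        r = |dist x y - dist p q|})

/-- A finite metric space is generic if all its nonzero distances are pairwise distinct
and all its triangle inequalities are strict. -/
def IsGenericSpace (X : Type*) [MetricSpace X] : Prop :=
  (∀ x y z w : X, x ≠ y → z ≠ w → dist x y = dist z w → ({x, y} : Set X) = {z, w}) ∧
  (∀ x y z : X, x ≠ y → y ≠ z → x ≠ z → dist x z < dist x y + dist y z)

/-- A bijection between metric spaces is a structural isomorphism if it preserves the
order on the set of distances. -/
def IsStructuralIsomorphism {X Y : Type*} [MetricSpace X] [MetricSpace Y] (f : X ≃ Y) : Prop :=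
  ∀ x y z w : X, dist x y ≤ dist z w ↔ dist (f x) (f y) ≤ dist (f z) (f w)

/-!
A structural isomorphism `f` preserves the order of distances, so one enumeration of the pairs
of `X` lists the distances of both `X` and `Y` (transported by `f`) in ascending order. Hence
`ν(X)` and `ν(Y)` compare the half-distance of each pair `{x, y}` with that of `{f x, f y}`,
i.e. `|d(x, y) - d(f x, f y)| ≤ 2 ‖ν(X) − ν(Y)‖_∞`. The graph of `f` is then a correspondence
of distortion at most `2 ‖ν(X) − ν(Y)‖_∞`, and `d_GH` is at most half of it.
-/

lemma supDist_nonneg (l₁ l₂ : List ℝ) : 0 ≤ supDist l₁ l₂ := by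
  unfold supDist
  induction List.zipWith (fun a b => |a - b|) l₁ l₂ with
  | nil => exact le_rfl
  | cons _ _ ih => exact le_max_of_le_right ih

lemma abs_sub_le_supDist_map {α : Type*} {l : List α} (v w : α → ℝ) {a : α} (ha : a ∈ l) :
    |v a - w a| ≤ supDist (l.map v) (l.map w) := by
  rw [supDist, List.zipWith_map, List.zipWith_self]
  exact List.le_max_of_le' 0 (List.mem_map_of_mem ha) le_rfl

namespace Multiset

variable {α β : Type*} [LinearOrder β]

lemma sort_map_coe_of_pairwise {l : List α} {v : α → β} (h : l.Pairwise (v · ≤ v ·)) :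
    ((l : Multiset α).map v).sort (· ≤ ·) = l.map v := by
  rw [map_coe, coe_sort]
  exact List.mergeSort_eq_self _ (List.pairwise_map.2 h)

lemma exists_coe_eq_pairwise (s : Multiset α) (v : α → β) :
    ∃ l : List α, (l : Multiset α) = s ∧ l.Pairwise (v · ≤ v ·) := by
  refine ⟨s.toList.mergeSort (fun a b => decide (v a ≤ v b)), ?_, ?_⟩
  · rw [coe_eq_coe.2 (List.mergeSort_perm _ _), coe_toList]
  · simpa using List.pairwise_mergeSort (le := fun a b => decide (v a ≤ v b))
      (fun _ _ _ hab hbc => by simpa using (of_decide_eq_true hab).trans (of_decide_eq_true hbc))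
      (fun a b => by simpa using le_total (v a) (v b)) s.toList

end Multiset

/-- A list sorting `s` by `v` also sorts it by `w`, so both sorted value lists are images of one
common list of elements of `s`. -/
lemma abs_sub_le_supDist_sort_map {α : Type*} (s : Multiset α) (v w : α → ℝ)
    (hvw : ∀ a b, v a ≤ v b → w a ≤ w b) {a : α} (ha : a ∈ s) :
    |v a - w a| ≤ supDist ((s.map v).sort (· ≤ ·)) ((s.map w).sort (· ≤ ·)) := by
  obtain ⟨l, rfl, hl⟩ := s.exists_coe_eq_pairwise v
  rw [Multiset.sort_map_coe_of_pairwise hl,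
    Multiset.sort_map_coe_of_pairwise (hl.imp (hvw _ _))]
  exact abs_sub_le_supDist_map v w (Multiset.mem_coe.1 ha)

noncomputable def offDiagPairs (X : Type*) [Fintype X] : Finset (Sym2 X) :=
  Finset.univ.filter fun p => ¬ p.IsDiag

lemma offDiagPairs_map_equiv {X Y : Type*} [Fintype X] [Fintype Y] (f : X ≃ Y) :
    (offDiagPairs X).map f.toEmbedding.sym2Map = offDiagPairs Y := by
  have hsurj : Function.Surjective f.toEmbedding.sym2Map := fun p =>
    ⟨p.map f.symm, by simp [Sym2.map_map]⟩
  rw [offDiagPairs, offDiagPairs, ← Finset.map_univ_of_surjective hsurj, Finset.filter_map]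
  congr 2
  ext p
  exact not_congr (Sym2.isDiag_map f.injective).symm

noncomputable def halfDist (X : Type*) [MetricSpace X] : Sym2 X → ℝ :=
  Sym2.lift ⟨fun x y => dist x y / 2, fun x y => by simp [dist_comm]⟩

@[simp]
lemma halfDist_mk {X : Type*} [MetricSpace X] (x y : X) : halfDist X s(x, y) = dist x y / 2 := rfl

lemma nuList_eq (X : Type*) [MetricSpace X] [Fintype X] :
    nuList X = ((offDiagPairs X).val.map (halfDist X)).sort (· ≤ ·) := rfl

lemma nuList_eq_of_equiv {X Y : Type*} [Fintype X] [MetricSpace Y] [Fintype Y] (f : X ≃ Y) :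
    nuList Y = ((offDiagPairs X).val.map (halfDist Y ∘ Sym2.map f)).sort (· ≤ ·) := by
  rw [nuList_eq Y, ← offDiagPairs_map_equiv f, Finset.map_val, Multiset.map_map]
  rfl

namespace IsStructuralIsomorphism

variable {X Y : Type*} [MetricSpace X] [MetricSpace Y] {f : X ≃ Y}

lemma halfDist_map_le_halfDist_map (hf : IsStructuralIsomorphism f) {p q : Sym2 X}
    (h : halfDist X p ≤ halfDist X q) : halfDist Y (p.map f) ≤ halfDist Y (q.map f) := by
  induction p using Sym2.ind with
  | _ x y =>
  induction q using Sym2.ind with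
  | _ z w =>
  simp only [halfDist_mk, Sym2.map_mk] at h ⊢
  linarith [(hf x y z w).1 (by linarith)]

lemma abs_dist_sub_dist_le [Fintype X] [Fintype Y] (hf : IsStructuralIsomorphism f) (x y : X) :
    |dist x y - dist (f x) (f y)| ≤ 2 * supDist (nuList X) (nuList Y) := by
  rcases eq_or_ne x y with rfl | hxy
  · simpa using supDist_nonneg (nuList X) (nuList Y)
  have hpair : s(x, y) ∈ (offDiagPairs X).val := by simp [offDiagPairs, hxy]
  have key := abs_sub_le_supDist_sort_map _ (halfDist X) (halfDist Y ∘ Sym2.map f)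
    (fun _ _ => hf.halfDist_map_le_halfDist_map) hpair
  rw [← nuList_eq, ← nuList_eq_of_equiv] at key
  simp only [Function.comp_apply, halfDist_mk, Sym2.map_mk, ← sub_div, abs_div,
    abs_two] at key
  linarith

end IsStructuralIsomorphism

lemma ghDist_le_of_surjective_of_abs_dist_sub_le {X Y : Type*} [MetricSpace X] [CompactSpace X]
    [Nonempty X] [MetricSpace Y] [CompactSpace Y] [Nonempty Y] {f : X → Y}
    (hf : Function.Surjective f) {ε : ℝ} (h : ∀ x y, |dist x y - dist (f x) (f y)| ≤ ε) :
    GromovHausdorff.ghDist X Y ≤ ε / 2 := by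
  have := GromovHausdorff.ghDist_le_of_approx_subsets (s := Set.univ) (fun x => f x)
    (ε₁ := 0) (ε₃ := 0) (fun x => ⟨x, trivial, (dist_self x).le⟩)
    (fun y => ⟨⟨(hf y).choose, trivial⟩, by rw [(hf y).choose_spec, dist_self]⟩)
    (fun x y => h x y)
  linarith

theorem ghDist_le_supDist_of_structural_isomorphism_general
    (X Y : Type) [MetricSpace X] [Fintype X] [Nonempty X] [MetricSpace Y] [Fintype Y] [Nonempty Y]
    (f : X ≃ Y) (hf : IsStructuralIsomorphism f) :
    GromovHausdorff.ghDist X Y ≤ supDist (nuList X) (nuList Y) := by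
  have := ghDist_le_of_surjective_of_abs_dist_sub_le f.surjective hf.abs_dist_sub_dist_le
  linarith

/-- If two `n`-point metric spaces (`n ≥ 2`) are structurally isomorphic, then their
Gromov–Hausdorff distance is at most `‖ν(X) − ν(Y)‖_∞`. -/
theorem ghDist_le_supDist_of_structural_isomorphism
    (n : ℕ) (hn : 2 ≤ n)
    (X Y : Type) [MetricSpace X] [Fintype X] [Nonempty X] [MetricSpace Y] [Fintype Y] [Nonempty Y]
    (hX : Fintype.card X = n) (hY : Fintype.card Y = n)
    (f : X ≃ Y) (hf : IsStructuralIsomorphism f) :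
    GromovHausdorff.ghDist X Y ≤ supDist (nuList X) (nuList Y) :=
  ghDist_le_supDist_of_structural_isomorphism_general X Y f hf
end

section
/- Let X = {x_1,…,x_n} be a generic metric space with n ≥ 2 points, and let Y = {y_1,…,y_n} be a metric space with n points such that |d(x_i,x_j) − d(y_i,y_j)| < δ(X)/3 for all 1 ≤ i, j ≤ n. Then Y is generic and the bijection x_i ↦ y_i is a structural isomorphism. -/
open scoped Classical

lemma ncard_triple_eq {X : Type} (x y z : X) (hxy : x ≠ y) (hyz : y ≠ z) (hxz : x ≠ z) :
    ({x, y, z} : Set X).ncard = 3 := by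
  rw [Set.ncard_insert_of_notMem (by simp [hxy, hxz]), Set.ncard_pair hyz]

lemma three_le_ncard_quad {X : Type} (x y z w : X) (hxy : x ≠ y) (hzw : z ≠ w)
    (hne : ({x, y} : Set X) ≠ {z, w}) : 3 ≤ ({x, y, z, w} : Set X).ncard := by
  by_cases hz : z ∈ ({x, y} : Set X)
  · have hw : w ∉ ({x, y} : Set X) := by
      intro hw
      refine hne (Set.eq_of_subset_of_ncard_le ?_ ?_ (Set.toFinite _)).symm
      · intro a ha
        rcases ha with rfl | rfl
        · exact hz
        · exact hw
      · rw [Set.ncard_pair hxy, Set.ncard_pair hzw]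
    have hwx : x ≠ w := fun h => hw (by simp [h])
    have hwy : y ≠ w := fun h => hw (by simp [h])
    calc 3 = ({x, y, w} : Set X).ncard := (ncard_triple_eq x y w hxy hwy hwx).symm
    _ ≤ ({x, y, z, w} : Set X).ncard := by
        refine Set.ncard_le_ncard ?_ (Set.toFinite _)
        intro a ha
        simp only [Set.mem_insert_iff, Set.mem_singleton_iff] at ha ⊢
        tauto
  · have hzx : x ≠ z := fun h => hz (by simp [h])
    have hzy : y ≠ z := fun h => hz (by simp [h])
    calc 3 = ({x, y, z} : Set X).ncard := (ncard_triple_eq x y z hxy hzy hzx).symm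
    _ ≤ ({x, y, z, w} : Set X).ncard := by
        refine Set.ncard_le_ncard ?_ (Set.toFinite _)
        intro a ha
        simp only [Set.mem_insert_iff, Set.mem_singleton_iff] at ha ⊢
        tauto

lemma card_ge_of_ncard {X : Type} [Fintype X] {s : Set X} {n : ℕ} (h : n ≤ s.ncard) :
    n ≤ Fintype.card X := by
  calc n ≤ s.ncard := h
  _ ≤ (Set.univ : Set X).ncard := Set.ncard_le_ncard (Set.subset_univ _) Set.finite_univ
  _ = Fintype.card X := by rw [Set.ncard_univ, Nat.card_eq_fintype_card]

lemma delta_le_abs {X : Type} [MetricSpace X] [Fintype X]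
    (x y p q : X) (hxy : x ≠ y) (hpq : p ≠ q)
    (h3 : 3 ≤ ({x, y, p, q} : Set X).ncard) :
    deltaX X ≤ |dist x y - dist p q| := by
  have hcard : 3 ≤ Fintype.card X := card_ge_of_ncard h3
  rw [deltaX, if_neg (by omega)]
  refine (min_le_right _ _).trans (csInf_le ⟨0, ?_⟩ ⟨x, y, p, q, hxy, hpq, h3, rfl⟩)
  rintro r ⟨a, b, c, d, _, _, _, rfl⟩
  exact abs_nonneg _

lemma delta_le_tri {X : Type} [MetricSpace X] [Fintype X]
    (x y z : X) (hxy : x ≠ y) (hyz : y ≠ z) (hxz : x ≠ z) :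
    deltaX X ≤ dist x y + dist y z - dist x z := by
  have hcard : 3 ≤ Fintype.card X :=
    card_ge_of_ncard (n := 3) (s := {x, y, z}) (ncard_triple_eq x y z hxy hyz hxz).ge
  rw [deltaX, if_neg (by omega)]
  refine (min_le_left _ _).trans (csInf_le ⟨0, ?_⟩ ⟨x, y, z, hxy, hyz, hxz, rfl⟩)
  rintro r ⟨a, b, c, _, _, _, rfl⟩
  have := dist_triangle a b c
  linarith

/-- If `X` is a generic metric space with `n ≥ 2` points and `Y` is an `n`-point metric
space whose corresponding distances differ from those of `X` by less than `δ(X)/3`,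
then `Y` is generic and the correspondence `x_i ↦ y_i` is a structural isomorphism. -/
theorem generic_of_close_distances
    (X Y : Type) [MetricSpace X] [Fintype X] [MetricSpace Y] [Fintype Y]
    (hn : 2 ≤ Fintype.card X) (hX : IsGenericSpace X) (f : X ≃ Y)
    (hclose : ∀ x x' : X, |dist x x' - dist (f x) (f x')| < deltaX X / 3) :
    IsGenericSpace Y ∧ IsStructuralIsomorphism f := by
  have hne : Nonempty X := Fintype.card_pos_iff.mp (by omega)
  obtain ⟨x0⟩ := hne
  have hδ : 0 < deltaX X / 3 := by
    have := hclose x0 x0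
    simpa using this
  -- pair set equality cases
  have pair_cases : ∀ x y z w : X, x ≠ y → ({x, y} : Set X) = {z, w} →
      (x = z ∧ y = w) ∨ (x = w ∧ y = z) := by
    intro x y z w hxy h
    have hx : x ∈ ({z, w} : Set X) := h ▸ (by simp)
    have hy : y ∈ ({z, w} : Set X) := h ▸ (by simp)
    simp only [Set.mem_insert_iff, Set.mem_singleton_iff] at hx hy
    rcases hx with rfl | rfl <;> rcases hy with rfl | rfl <;> tauto
  -- key separation lemma
  have key : ∀ x y z w : X, x ≠ y → z ≠ w → ({x, y} : Set X) ≠ {z, w} →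
      dist x y < dist z w → dist (f x) (f y) < dist (f z) (f w) := by
    intro x y z w hxy hzw hpne hlt
    have h1 := delta_le_abs x y z w hxy hzw (three_le_ncard_quad x y z w hxy hzw hpne)
    rw [abs_sub_comm, abs_of_nonneg (by linarith)] at h1
    have h2 := abs_lt.mp (hclose x y)
    have h3 := abs_lt.mp (hclose z w)
    linarith
  -- distances of essentially distinct pairs differ
  have nedist : ∀ x y z w : X, x ≠ y → z ≠ w → ({x, y} : Set X) ≠ {z, w} →
      dist x y ≠ dist z w := by
    intro x y z w hxy hzw hpne heq
    have h1 := delta_le_abs x y z w hxy hzw (three_le_ncard_quad x y z w hxy hzw hpne)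
    rw [heq, sub_self, abs_zero] at h1
    linarith
  constructor
  · constructor
    · intro a b c d hab hcd hdist
      obtain ⟨x, rfl⟩ := f.surjective a
      obtain ⟨y, rfl⟩ := f.surjective b
      obtain ⟨z, rfl⟩ := f.surjective c
      obtain ⟨w, rfl⟩ := f.surjective d
      have hxy : x ≠ y := fun h => hab (by rw [h])
      have hzw : z ≠ w := fun h => hcd (by rw [h])
      have hpair : ({x, y} : Set X) = {z, w} := by
        by_contra hpne
        have h1 := delta_le_abs x y z w hxy hzw (three_le_ncard_quad x y z w hxy hzw hpne)
        have h2 := abs_lt.mp (hclose x y)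
        have h3 := abs_lt.mp (hclose z w)
        rcases abs_cases (dist x y - dist z w) with ⟨h4, _⟩ | ⟨h4, _⟩ <;>
          rw [h4] at h1 <;> linarith
      rcases pair_cases x y z w hxy hpair with ⟨rfl, rfl⟩ | ⟨rfl, rfl⟩
      · rfl
      · exact Set.pair_comm _ _
    · intro a b c hab hbc hac
      obtain ⟨x, rfl⟩ := f.surjective a
      obtain ⟨y, rfl⟩ := f.surjective b
      obtain ⟨z, rfl⟩ := f.surjective c
      have hxy : x ≠ y := fun h => hab (by rw [h])
      have hyz : y ≠ z := fun h => hbc (by rw [h])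
      have hxz : x ≠ z := fun h => hac (by rw [h])
      have h1 := delta_le_tri x y z hxy hyz hxz
      have h2 := abs_lt.mp (hclose x y)
      have h3 := abs_lt.mp (hclose y z)
      have h4 := abs_lt.mp (hclose x z)
      linarith
  · intro x y z w
    by_cases hxy : x = y
    · subst hxy
      simp [dist_nonneg]
    by_cases hzw : z = w
    · subst hzw
      constructor
      · intro h
        exfalso
        exact hxy (dist_le_zero.mp (by simpa using h))
      · intro h
        exfalso
        have : f x = f y := dist_le_zero.mp (by simpa using h)
        exact hxy (f.injective this)
    by_cases hpair : ({x, y} : Set X) = {z, w}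
    · rcases pair_cases x y z w hxy hpair with ⟨rfl, rfl⟩ | ⟨rfl, rfl⟩
      · simp
      · simp [dist_comm]
    · have hd := nedist x y z w hxy hzw hpair
      constructor
      · intro h
        exact le_of_lt (key x y z w hxy hzw hpair (lt_of_le_of_ne h hd))
      · intro h
        by_contra h'
        push_neg at h'
        have := key z w x y hzw hxy (Ne.symm hpair) h'
        linarith
end

section
/- Let X be a generic metric space with exactly n ≥ 2 points, and let Y be a nonempty finite metric space with strictly fewer than n points. Then d_GH(X,Y) ≥ δ(X)/2. -/
open scoped Classical

lemma deltaX_le_dist {X : Type*} [MetricSpace X] [Fintype X]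
    (hn : 2 ≤ Fintype.card X) {x y : X} (hxy : x ≠ y) : deltaX X ≤ dist x y := by
  by_cases hc : Fintype.card X ≤ 2
  · -- two-point case
    rw [deltaX, if_pos hc]
    apply Metric.diam_le_of_forall_dist_le dist_nonneg
    intro a _ b _
    rcases eq_or_ne a b with rfl | hab
    · simp [dist_nonneg]
    · have hall : ∀ c : X, c = a ∨ c = b := by
        intro c
        by_contra hcon
        push_neg at hcon
        have h3 : ({a, b, c} : Finset X).card = 3 := by
          rw [Finset.card_insert_of_notMem (by simp [hab, hcon.1.symm]),
            Finset.card_insert_of_notMem (by simp [hcon.2.symm])]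
          simp
        have := Finset.card_le_univ ({a, b, c} : Finset X)
        rw [h3] at this
        omega
      rcases hall x with rfl | rfl <;> rcases hall y with rfl | rfl <;>
        first | exact absurd rfl hxy | rw [dist_comm] | rfl
  · rw [deltaX, if_neg hc]
    push_neg at hc
    -- find a third point
    obtain ⟨z, hzx, hzy⟩ : ∃ z : X, z ≠ x ∧ z ≠ y := by
      by_contra hcon
      push_neg at hcon
      have hsub : (Finset.univ : Finset X) ⊆ {x, y} := by
        intro c _
        rcases eq_or_ne c x with rfl | hcx
        · simp
        · simp [hcon c hcx]
      have := Finset.card_le_card hsub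
      have h2 : ({x, y} : Finset X).card ≤ 2 := Finset.card_insert_le _ _ |>.trans (by simp)
      rw [Finset.card_univ] at this
      omega
    set A := {r : ℝ | ∃ x y z : X, x ≠ y ∧ y ≠ z ∧ x ≠ z ∧ r = dist x y + dist y z - dist x z}
    set B := {r : ℝ | ∃ x y p q : X, x ≠ y ∧ p ≠ q ∧ 3 ≤ ({x, y, p, q} : Set X).ncard ∧
        r = |dist x y - dist p q|}
    have bddA : BddBelow A := by
      refine ⟨0, ?_⟩
      rintro r ⟨a, b, c, -, -, -, rfl⟩
      have := dist_triangle a b c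
      linarith
    have bddB : BddBelow B := by
      refine ⟨0, ?_⟩
      rintro r ⟨a, b, c, d, -, -, -, rfl⟩
      exact abs_nonneg _
    have hncard : ∀ a b c : X, a ≠ b → a ≠ c → b ≠ c →
        3 ≤ ({a, c, b, c} : Set X).ncard := by
      intro a b c hab hac hbc
      have : ({a, c, b, c} : Set X) = {a, c, b} := by
        ext w; constructor <;> (intro h; simp at h ⊢; tauto)
      rw [this]
      exact le_of_eq (Set.ncard_eq_three.mpr ⟨a, c, b, hac, hab, hbc.symm, rfl⟩).symm
    rcases le_total (dist y z) (dist x z) with hle | hle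
    · have hA : sInf A ≤ dist x y + dist y z - dist x z :=
        csInf_le bddA ⟨x, y, z, hxy, hzy.symm, hzx.symm, rfl⟩
      have hB : sInf B ≤ |dist x z - dist y z| :=
        csInf_le bddB ⟨x, z, y, z, hzx.symm, hzy.symm, hncard x y z hxy hzx.symm hzy.symm, rfl⟩
      rw [abs_of_nonneg (by linarith)] at hB
      have h1 := min_le_left (sInf A) (sInf B)
      have h2 := min_le_right (sInf A) (sInf B)
      have := dist_nonneg (x := x) (y := y)
      linarith
    · have hA : sInf A ≤ dist y x + dist x z - dist y z :=
        csInf_le bddA ⟨y, x, z, hxy.symm, hzx.symm, hzy.symm, rfl⟩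
      have hB : sInf B ≤ |dist y z - dist x z| :=
        csInf_le bddB ⟨y, z, x, z, hzy.symm, hzx.symm, hncard y x z hxy.symm hzy.symm hzx.symm, rfl⟩
      rw [abs_of_nonneg (by linarith)] at hB
      have h1 := min_le_left (sInf A) (sInf B)
      have h2 := min_le_right (sInf A) (sInf B)
      have := dist_nonneg (x := x) (y := y)
      rw [dist_comm y x] at hA
      linarith

/-- If `X` is a generic metric space with `n ≥ 2` points and `Y` is a nonempty finite
metric space with strictly fewer than `n` points, then `d_GH(X,Y) ≥ δ(X)/2`. -/
theorem ghDist_ge_of_fewer_points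
    (X Y : Type) [MetricSpace X] [Fintype X] [Nonempty X]
    [MetricSpace Y] [Fintype Y] [Nonempty Y]
    (hn : 2 ≤ Fintype.card X) (hX : IsGenericSpace X)
    (hY : Fintype.card Y < Fintype.card X) :
    deltaX X / 2 ≤ GromovHausdorff.ghDist X Y := by
  by_contra hcon
  push_neg at hcon
  set Φ := GromovHausdorff.optimalGHInjl X Y
  set Ψ := GromovHausdorff.optimalGHInjr X Y
  have hΦ : Isometry Φ := GromovHausdorff.isometry_optimalGHInjl X Y
  have hΨ : Isometry Ψ := GromovHausdorff.isometry_optimalGHInjr X Y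
  have hkey : Metric.hausdorffDist (Set.range Φ) (Set.range Ψ) < deltaX X / 2 := by
    rw [GromovHausdorff.hausdorffDist_optimal]; exact hcon
  have hne : EMetric.hausdorffEdist (Set.range Φ) (Set.range Ψ) ≠ ⊤ :=
    Metric.hausdorffEdist_ne_top_of_nonempty_of_bounded (Set.range_nonempty _)
      (Set.range_nonempty _)
      ((isCompact_range hΦ.continuous).isBounded)
      ((isCompact_range hΨ.continuous).isBounded)
  have hf : ∀ x : X, ∃ y : Y, dist (Φ x) (Ψ y) < deltaX X / 2 := by
    intro x
    have h1 : Metric.infDist (Φ x) (Set.range Ψ) < deltaX X / 2 :=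
      lt_of_le_of_lt (Metric.infDist_le_hausdorffDist_of_mem (Set.mem_range_self x) hne) hkey
    obtain ⟨_, ⟨y, rfl⟩, hy⟩ := (Metric.infDist_lt_iff (Set.range_nonempty Ψ)).1 h1
    exact ⟨y, hy⟩
  choose f hfd using hf
  obtain ⟨x₁, x₂, h12, hfe⟩ := Fintype.exists_ne_map_eq_of_card_lt f hY
  have hlt : dist x₁ x₂ < deltaX X := by
    have := dist_triangle (Φ x₁) (Ψ (f x₁)) (Φ x₂)
    have h2 : dist (Ψ (f x₁)) (Φ x₂) < deltaX X / 2 := by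
      rw [dist_comm, hfe]; exact hfd x₂
    have h1 := hfd x₁
    have hiso : dist (Φ x₁) (Φ x₂) = dist x₁ x₂ := hΦ.dist_eq x₁ x₂
    linarith
  exact absurd (deltaX_le_dist hn h12) (not_le.2 hlt)
end

section
/- Let X be a generic metric space with exactly n ≥ 2 points, and let Y be a metric space with exactly n points such that d_GH(X,Y) < δ(X)/6. Then there exists a bijection f : X → Y that is a structural isomorphism and satisfies (1/2) · dis f = d_GH(X,Y); consequently d_GH(X,Y) = ‖ν(X) − ν(Y)‖_∞. -/
open scoped Classical

/-!
Inside an optimal coupling of `X` and `Y`, sending each point of `X` to a nearest point of `Y`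
gives a map `f` of distortion at most `2 d_GH(X,Y) < δ(X)/3`. Distinct points of `X` are at least
`δ(X)/2` apart and distances of different pairs differ by at least `δ(X)`, so such an `f` is
injective, hence bijective, and it preserves the order of distances. Any bijection of distortion
`D` gives `d_GH ≤ D/2`, whence `dis f = 2 d_GH`. Finally, an order-preserving bijection matches
the `k`-th smallest distance of `X` with the `k`-th smallest distance of `Y`, so
`‖ν(X) − ν(Y)‖_∞ = dis f / 2`.
-/

lemma le_iff_le_of_abs_sub_le {a a' b b' ε : ℝ} (ha : |a - a'| ≤ ε) (hb : |b - b'| ≤ ε)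
    (hab : 2 * ε < |a - b|) : a ≤ b ↔ a' ≤ b' := by
  rw [abs_le] at ha hb
  constructor <;> intro h
  · rw [abs_of_nonpos (by linarith)] at hab
    linarith
  · by_contra! h'
    rw [abs_of_nonneg (by linarith)] at hab
    linarith

lemma List.isGreatest_foldr_max_zero (l : List ℝ) :
    IsGreatest (insert 0 {x | x ∈ l}) (l.foldr max 0) := by
  induction l with
  | nil => simp [IsGreatest]
  | cons a l ih =>
    refine ⟨?_, ?_⟩
    · rcases max_choice a (l.foldr max 0) with h | h <;> rw [List.foldr_cons, h]
      · simp
      · rcases ih.1 with h0 | hl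
        · exact Or.inl h0
        · exact Or.inr (List.mem_cons_of_mem a hl)
    · rintro x (rfl | hx)
      · exact (ih.2 (Set.mem_insert 0 _)).trans (le_max_right _ _)
      · rcases List.mem_cons.1 hx with rfl | hx
        · exact le_max_left _ _
        · exact (ih.2 (Or.inr hx)).trans (le_max_right _ _)

lemma Multiset.exists_sort_map_eq_map_sort {α : Type*} (S : Multiset α) {g h : α → ℝ}
    (H : ∀ a b, g a ≤ g b ↔ h a ≤ h b) :
    ∃ φ : ℝ → ℝ, (∀ a, φ (g a) = h a) ∧
      (S.map h).sort (· ≤ ·) = ((S.map g).sort (· ≤ ·)).map φ := by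
  have hfac : Function.FactorsThrough h g := fun a b hab =>
    le_antisymm ((H a b).1 hab.le) ((H b a).1 hab.ge)
  refine ⟨Function.extend g h id, hfac.extend_apply id, ?_⟩
  rw [Multiset.map_sort _ _ _ (· ≤ ·), Multiset.map_map]
  · simp only [Function.comp_def, hfac.extend_apply]
  · simp only [Multiset.mem_map]
    rintro _ ⟨a, -, rfl⟩ _ ⟨b, -, rfl⟩
    simpa only [hfac.extend_apply] using H a b

lemma supDist_sort_map_eq {α : Type*} (S : Multiset α) {g h : α → ℝ}
    (H : ∀ a b, g a ≤ g b ↔ h a ≤ h b) {r : ℝ}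
    (hr : IsGreatest (insert 0 ((fun a => |g a - h a|) '' {a | a ∈ S})) r) :
    supDist ((S.map g).sort (· ≤ ·)) ((S.map h).sort (· ≤ ·)) = r := by
  obtain ⟨φ, hφ, hsort⟩ := S.exists_sort_map_eq_map_sort H
  have hset : {x | x ∈ ((S.map g).sort (· ≤ ·)).map fun t => |t - φ t|} =
      (fun a => |g a - h a|) '' {a | a ∈ S} := by
    ext x
    simp only [Set.mem_ofPred_eq, List.mem_map, Multiset.mem_sort, Multiset.mem_map,
      Set.mem_image]
    constructor
    · rintro ⟨_, ⟨a, ha, rfl⟩, rfl⟩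
      exact ⟨a, ha, by rw [hφ]⟩
    · rintro ⟨a, ha, rfl⟩
      exact ⟨g a, ⟨a, ha, rfl⟩, by rw [hφ]⟩
  rw [← hset] at hr
  rw [hsort, supDist, List.zipWith_map_right, List.zipWith_self]
  exact (List.isGreatest_foldr_max_zero _).unique hr

section Distortion

variable {X Y : Type*} [MetricSpace X] [MetricSpace Y]

noncomputable def distortion (f : X → Y) : ℝ :=
  ⨆ p : X × X, |dist p.1 p.2 - dist (f p.1) (f p.2)|

lemma relDis_graph_eq_distortion (f : X → Y) :
    relDis {p : X × Y | p.2 = f p.1} = distortion f := by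
  rw [relDis, distortion, iSup, Set.range]
  congr 1
  ext r
  constructor
  · rintro ⟨p, hp, q, hq, rfl⟩
    exact ⟨(p.1, q.1), by rw [show p.2 = f p.1 from hp, show q.2 = f q.1 from hq]⟩
  · rintro ⟨⟨a, b⟩, rfl⟩
    exact ⟨(a, f a), rfl, (b, f b), rfl, rfl⟩

lemma distortion_le {f : X → Y} {ε : ℝ}
    (hf : ∀ a b : X, |dist a b - dist (f a) (f b)| ≤ ε) (hε : 0 ≤ ε) : distortion f ≤ ε :=
  Real.iSup_le (fun p => hf p.1 p.2) hε

lemma abs_dist_sub_dist_le_distortion [Finite X] (f : X → Y) (a b : X) :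
    |dist a b - dist (f a) (f b)| ≤ distortion f :=
  le_ciSup (f := fun p : X × X => |dist p.1 p.2 - dist (f p.1) (f p.2)|)
    (Finite.bddAbove_range _) (a, b)

lemma exists_abs_dist_sub_dist_eq_distortion [Finite X] [Nonempty X] (f : X → Y) :
    ∃ a b, |dist a b - dist (f a) (f b)| = distortion f := by
  obtain ⟨⟨a, b⟩, h⟩ := exists_eq_ciSup_of_finite
    (f := fun p : X × X => |dist p.1 p.2 - dist (f p.1) (f p.2)|)
  exact ⟨a, b, h⟩

lemma injective_of_abs_dist_sub_dist_le {f : X → Y} {ε : ℝ}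
    (hf : ∀ a b : X, |dist a b - dist (f a) (f b)| ≤ ε)
    (hsep : ∀ a b : X, a ≠ b → ε < dist a b) : Function.Injective f := by
  intro a b hab
  by_contra hne
  have := (abs_le.1 (hf a b)).2
  rw [hab, dist_self] at this
  linarith [hsep a b hne]

lemma isStructuralIsomorphism_of_abs_dist_sub_dist_le (f : X ≃ Y) {ε : ℝ}
    (hf : ∀ a b : X, |dist a b - dist (f a) (f b)| ≤ ε)
    (hsep : ∀ a b c d : X, a ≠ b → c ≠ d → s(a, b) ≠ s(c, d) →
      2 * ε < |dist a b - dist c d|) :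
    IsStructuralIsomorphism f := by
  intro x y z w
  by_cases hxy : x = y
  · subst hxy
    simp
  by_cases hzw : z = w
  · subst hzw
    simp [hxy]
  by_cases hp : s(x, y) = s(z, w)
  · rcases Sym2.eq_iff.1 hp with ⟨rfl, rfl⟩ | ⟨rfl, rfl⟩ <;> simp [dist_comm]
  exact le_iff_le_of_abs_sub_le (hf x y) (hf z w) (hsep x y z w hxy hzw hp)

end Distortion

namespace GromovHausdorff

variable {X Y : Type*} [MetricSpace X] [CompactSpace X] [Nonempty X]
  [MetricSpace Y] [CompactSpace Y] [Nonempty Y]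

lemma ghDist_le_of_surjective_of_abs_dist_sub_dist_le {f : X → Y}
    (hs : Function.Surjective f) {ε : ℝ} (hf : ∀ a b : X, |dist a b - dist (f a) (f b)| ≤ ε) :
    ghDist X Y ≤ ε / 2 := by
  simpa using ghDist_le_of_approx_subsets (s := Set.univ) (fun x => f x) (ε₁ := 0) (ε₃ := 0)
    (fun x => ⟨x, Set.mem_univ x, by simp⟩)
    (fun y => ⟨⟨(hs y).choose, Set.mem_univ _⟩, by simp [(hs y).choose_spec]⟩)
    (fun a b => hf a b)

lemma exists_abs_dist_sub_dist_le_two_mul_ghDist :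
    ∃ f : X → Y, ∀ a b, |dist a b - dist (f a) (f b)| ≤ 2 * ghDist X Y := by
  set r := ghDist X Y
  set il := optimalGHInjl X Y
  set ir := optimalGHInjr X Y
  have hil : Isometry il := isometry_optimalGHInjl X Y
  have hir : Isometry ir := isometry_optimalGHInjr X Y
  have hcr : IsCompact (Set.range ir) := isCompact_range hir.continuous
  have hnear : ∀ x, ∃ y, dist (il x) (ir y) ≤ r := by
    intro x
    obtain ⟨_, ⟨y, rfl⟩, hy⟩ := hcr.exists_infDist_eq_dist (Set.range_nonempty ir) (il x)
    refine ⟨y, hy ▸ ?_⟩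
    calc Metric.infDist (il x) (Set.range ir)
        ≤ Metric.hausdorffDist (Set.range il) (Set.range ir) :=
          Metric.infDist_le_hausdorffDist_of_mem (Set.mem_range_self x)
            (Metric.hausdorffEDist_ne_top_of_nonempty_of_bounded (Set.range_nonempty il)
              (Set.range_nonempty ir) (isCompact_range hil.continuous).isBounded hcr.isBounded)
      _ = r := hausdorffDist_optimal
  choose f hf using hnear
  refine ⟨f, fun a b => abs_sub_le_iff.2 ⟨?_, ?_⟩⟩
  · have := dist_triangle4 (il a) (ir (f a)) (ir (f b)) (il b)
    rw [hil.dist_eq, hir.dist_eq, dist_comm (ir _)] at this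
    linarith [hf a, hf b]
  · have := dist_triangle4 (ir (f a)) (il a) (il b) (ir (f b))
    rw [hil.dist_eq, hir.dist_eq, dist_comm (ir _)] at this
    linarith [hf a, hf b]

end GromovHausdorff

lemma Sym2.three_le_ncard_of_ne {α : Type*} {a b c d : α} (hab : a ≠ b) (hcd : c ≠ d)
    (hne : s(a, b) ≠ s(c, d)) : 3 ≤ ({a, b, c, d} : Set α).ncard := by
  obtain ⟨e, he, hea, heb⟩ : ∃ e ∈ ({c, d} : Set α), e ≠ a ∧ e ≠ b := by
    by_contra! h
    simp only [Set.mem_insert_iff, Set.mem_singleton_iff, forall_eq_or_imp, forall_eq] at h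
    exact hne (by grind [Sym2.eq_iff])
  calc 3 = ({a, b, e} : Set α).ncard :=
        (Set.ncard_eq_three.2 ⟨a, b, e, hab, hea.symm, heb.symm, rfl⟩).symm
    _ ≤ _ := Set.ncard_le_ncard (by grind) (Set.toFinite _)

section Delta

variable {X : Type*} [MetricSpace X] [Fintype X]

lemma deltaX_le_two_mul_dist {a b : X} (hab : a ≠ b) : deltaX X ≤ 2 * dist a b := by
  rw [deltaX]
  split_ifs with hcard
  · have huniv : (Finset.univ : Finset X) = {a, b} :=
      (Finset.eq_univ_of_card {a, b}
        (le_antisymm (Finset.card_le_univ _) (Finset.card_pair hab ▸ hcard))).symm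
    rw [← Finset.coe_univ, huniv, Finset.coe_pair, Metric.diam_pair]
    linarith [dist_nonneg (x := a) (y := b)]
  · obtain ⟨c, -, hc⟩ := Finset.exists_mem_notMem_of_card_lt_card (s := {a, b})
      (t := Finset.univ) (by rw [Finset.card_pair hab, Finset.card_univ]; omega)
    simp only [Finset.mem_insert, Finset.mem_singleton, not_or] at hc
    have hbdd : BddBelow {r : ℝ | ∃ x y z : X, x ≠ y ∧ y ≠ z ∧ x ≠ z ∧
        r = dist x y + dist y z - dist x z} :=
      ⟨0, by rintro _ ⟨x, y, z, -, -, -, rfl⟩; linarith [dist_triangle x y z]⟩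
    calc _ ≤ dist a b + dist b c - dist a c :=
          (min_le_left _ _).trans <|
            csInf_le hbdd ⟨a, b, c, hab, Ne.symm hc.2, Ne.symm hc.1, rfl⟩
      _ ≤ 2 * dist a b := by linarith [dist_triangle b a c, dist_comm a b]

lemma deltaX_le_abs_dist_sub_dist {a b c d : X} (hab : a ≠ b) (hcd : c ≠ d)
    (hne : s(a, b) ≠ s(c, d)) : deltaX X ≤ |dist a b - dist c d| := by
  have h3 := Sym2.three_le_ncard_of_ne hab hcd hne
  have hcard : ¬ Fintype.card X ≤ 2 := by
    have := Set.ncard_le_card ({a, b, c, d} : Set X)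
    rw [Nat.card_eq_fintype_card] at this
    omega
  rw [deltaX, if_neg hcard]
  exact (min_le_right _ _).trans <| csInf_le
    ⟨0, by rintro _ ⟨x, y, p, q, -, -, -, rfl⟩; exact abs_nonneg _⟩
    ⟨a, b, c, d, hab, hcd, h3, rfl⟩

end Delta

lemma Sym2.map_val_filter_not_isDiag {α β : Type*} [Fintype α] [Fintype β] (f : α ≃ β) :
    (Finset.univ.filter fun p : Sym2 α => ¬ p.IsDiag).val.map (Sym2.map f) =
      (Finset.univ.filter fun p : Sym2 β => ¬ p.IsDiag).val := by
  have hs : Function.Surjective f.toEmbedding.sym2Map := fun q =>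
    ⟨Sym2.map f.symm q, by simp [Sym2.map_map]⟩
  rw [← Finset.map_univ_of_surjective hs, Finset.filter_map, Finset.map_val]
  simp [Sym2.isDiag_map f.injective]

section Nu

variable {X Y : Type*} [MetricSpace X] [Fintype X] [MetricSpace Y] [Fintype Y]

lemma nuList_eq_sort_map_halfDist :
    nuList X = ((Finset.univ.filter fun p : Sym2 X => ¬ p.IsDiag).val.map
      (halfDist X)).sort (· ≤ ·) :=
  rfl

lemma supDist_nuList_eq_half_distortion [Nonempty X] (f : X ≃ Y)
    (hf : IsStructuralIsomorphism f) :
    supDist (nuList X) (nuList Y) = distortion f / 2 := by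
  rw [nuList_eq_sort_map_halfDist, nuList_eq_sort_map_halfDist,
    ← Sym2.map_val_filter_not_isDiag f, Multiset.map_map]
  refine supDist_sort_map_eq _ ?_ ⟨?_, ?_⟩
  · intro p q
    induction p using Sym2.ind with | _ x y =>
    induction q using Sym2.ind with | _ z w =>
    simpa [div_le_div_iff_of_pos_right] using hf x y z w
  · obtain ⟨a, b, hab⟩ := exists_abs_dist_sub_dist_eq_distortion f
    by_cases h : a = b
    · subst h
      left
      simp [← hab]
    · right
      refine ⟨s(a, b), by simpa using h, ?_⟩
      simp only [Function.comp_apply, Sym2.map_mk, halfDist_mk, ← hab]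
      rw [← sub_div, abs_div, abs_two]
  · rintro _ (rfl | ⟨p, -, rfl⟩)
    · obtain ⟨a, b, hab⟩ := exists_abs_dist_sub_dist_eq_distortion f
      linarith [abs_nonneg (dist a b - dist (f a) (f b))]
    · induction p using Sym2.ind with | _ a b =>
      simp only [Function.comp_apply, Sym2.map_mk, halfDist_mk]
      rw [← sub_div, abs_div, abs_two]
      linarith [abs_dist_sub_dist_le_distortion f a b]

end Nu

theorem exists_structural_isomorphism_of_ghDist_lt_general
    (X Y : Type) [MetricSpace X] [Fintype X] [Nonempty X]
    [MetricSpace Y] [Fintype Y] [Nonempty Y]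
    (hcard : Fintype.card Y = Fintype.card X)
    (hlt : GromovHausdorff.ghDist X Y < deltaX X / 6) :
    (∃ f : X ≃ Y, IsStructuralIsomorphism f ∧
      (1 / 2) * relDis {p : X × Y | p.2 = f p.1} = GromovHausdorff.ghDist X Y) ∧
    GromovHausdorff.ghDist X Y = supDist (nuList X) (nuList Y) := by
  set r := GromovHausdorff.ghDist X Y
  have hr : 0 ≤ r := dist_nonneg
  obtain ⟨f₀, hf₀⟩ :=
    GromovHausdorff.exists_abs_dist_sub_dist_le_two_mul_ghDist (X := X) (Y := Y)
  have hinj : Function.Injective f₀ := injective_of_abs_dist_sub_dist_le hf₀ fun a b hab => by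
    linarith [deltaX_le_two_mul_dist hab]
  let f : X ≃ Y :=
    .ofBijective f₀ ((Fintype.bijective_iff_injective_and_card f₀).2 ⟨hinj, hcard.symm⟩)
  have hiso : IsStructuralIsomorphism f :=
    isStructuralIsomorphism_of_abs_dist_sub_dist_le f hf₀ fun a b c d hab hcd hne => by
      linarith [deltaX_le_abs_dist_sub_dist hab hcd hne]
  have hdis : distortion f = 2 * r := le_antisymm (distortion_le hf₀ (by linarith)) <| by
    linarith [GromovHausdorff.ghDist_le_of_surjective_of_abs_dist_sub_dist_le f.surjective
      (abs_dist_sub_dist_le_distortion f)]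
  refine ⟨⟨f, hiso, ?_⟩, ?_⟩
  · rw [relDis_graph_eq_distortion, hdis]
    ring
  · rw [supDist_nuList_eq_half_distortion f hiso, hdis]
    ring

/-- If `X` is a generic metric space with `n ≥ 2` points and `Y` is an `n`-point metric
space with `d_GH(X,Y) < δ(X)/6`, then there is a bijection `f : X → Y` that is a
structural isomorphism with `(1/2)·dis f = d_GH(X,Y)`; consequently
`d_GH(X,Y) = ‖ν(X) − ν(Y)‖_∞`. -/
theorem exists_structural_isomorphism_of_ghDist_lt
    (X Y : Type) [MetricSpace X] [Fintype X] [Nonempty X]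
    [MetricSpace Y] [Fintype Y] [Nonempty Y]
    (hn : 2 ≤ Fintype.card X) (hcard : Fintype.card Y = Fintype.card X)
    (hX : IsGenericSpace X)
    (hlt : GromovHausdorff.ghDist X Y < deltaX X / 6) :
    (∃ f : X ≃ Y, IsStructuralIsomorphism f ∧
      (1 / 2) * relDis {p : X × Y | p.2 = f p.1} = GromovHausdorff.ghDist X Y) ∧
    GromovHausdorff.ghDist X Y = supDist (nuList X) (nuList Y) :=
  exists_structural_isomorphism_of_ghDist_lt_general X Y hcard hlt
end

section
/- Let X = {x_1,…,x_n} be a generic metric space with n ≥ 2 points and set δ = δ(X)/6. Suppose real numbers ρ_{ij} (1 ≤ i < j ≤ n) satisfy |ρ_{ij} − d(x_i,x_j)/2| < δ for all i < j. Then the symmetric function on {1,…,n} defined by d(y_i,y_j) = 2ρ_{ij} for i ≠ j (and 0 on the diagonal) is a metric, i.e., all values 2ρ_{ij} are positive and all triangle inequalities hold; moreover the resulting n-point metric space Y satisfies d_GH(X,Y) < δ. -/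
open scoped Classical

lemma defect_bdd (X : Type*) [MetricSpace X] :
    BddBelow {r : ℝ | ∃ x y z : X, x ≠ y ∧ y ≠ z ∧ x ≠ z ∧
      r = dist x y + dist y z - dist x z} := by
  refine ⟨0, ?_⟩
  rintro r ⟨a, b, c, -, -, -, rfl⟩
  have := dist_triangle a b c
  linarith

lemma deltaX_le_defect {X : Type*} [MetricSpace X] [Fintype X] {x y z : X}
    (hxy : x ≠ y) (hyz : y ≠ z) (hxz : x ≠ z) :
    deltaX X ≤ dist x y + dist y z - dist x z := by
  have h3 : 3 ≤ Fintype.card X := by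
    have hcard : ({x, y, z} : Finset X).card = 3 := by
      rw [Finset.card_insert_of_notMem (by simp [hxy, hxz]),
        Finset.card_insert_of_notMem (by simp [hyz]), Finset.card_singleton]
    calc 3 = ({x, y, z} : Finset X).card := hcard.symm
      _ ≤ Fintype.card X := Finset.card_le_univ _
  rw [deltaX, if_neg (by omega)]
  exact le_trans (min_le_left _ _)
    (csInf_le (defect_bdd X) ⟨x, y, z, hxy, hyz, hxz, rfl⟩)

lemma deltaX_le_two_dist {X : Type*} [MetricSpace X] [Fintype X] {x y : X}
    (hxy : x ≠ y) : deltaX X ≤ 2 * dist x y := by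
  by_cases h : Fintype.card X ≤ 2
  · rw [deltaX, if_pos h]
    have key : ∀ a : X, a = x ∨ a = y := by
      intro a
      by_contra hc
      push_neg at hc
      have hcard : ({x, y, a} : Finset X).card = 3 := by
        rw [Finset.card_insert_of_notMem (by simp [hxy, Ne.symm hc.1]),
          Finset.card_insert_of_notMem (by simp [Ne.symm hc.2]), Finset.card_singleton]
      have := Finset.card_le_univ ({x, y, a} : Finset X)
      rw [hcard] at this
      omega
    refine Metric.diam_le_of_forall_dist_le (by positivity) ?_
    intro a _ b _
    have d0 := dist_nonneg (x := x) (y := y)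
    have hab : dist a b = 0 ∨ dist a b = dist x y := by
      rcases key a with ha | ha <;> rcases key b with hb | hb <;> rw [ha, hb] <;>
        first
          | (left; exact dist_self _)
          | (right; rfl)
          | (right; exact dist_comm _ _)
    rcases hab with h' | h' <;> rw [h'] <;> linarith
  · push_neg at h
    obtain ⟨z, hzx, hzy⟩ : ∃ z : X, z ≠ x ∧ z ≠ y := by
      by_contra hz
      push_neg at hz
      have hsub : (Finset.univ : Finset X) ⊆ {x, y} := by
        intro a _
        rcases eq_or_ne a x with rfl | ha
        · simp
        · simp [hz a ha]
      have := Finset.card_le_card hsub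
      have h2 : ({x, y} : Finset X).card ≤ 2 :=
        le_trans (Finset.card_insert_le _ _) (by simp)
      rw [Finset.card_univ] at this
      omega
    have hle : deltaX X ≤ dist x y + dist y z - dist x z :=
      deltaX_le_defect hxy (Ne.symm hzy) (Ne.symm hzx)
    have := dist_triangle y x z
    have := dist_comm x y
    linarith

/-- If `X = {x_1,…,x_n}` is generic (`n ≥ 2`), `δ = δ(X)/6`, and the numbers `ρ i j`
(symmetric, off-diagonal) satisfy `|ρ i j − d(x_i,x_j)/2| < δ`, then the symmetric
function `d(y_i,y_j) = 2 ρ i j` (and `0` on the diagonal) is a metric — all its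
off-diagonal values are positive and all triangle inequalities hold — and the resulting
`n`-point metric space `Y` satisfies `d_GH(X,Y) < δ`. -/
theorem metric_from_perturbed_distances
    (n : ℕ) (hn : 2 ≤ n)
    (X : Type) [MetricSpace X] [Fintype X] [Nonempty X] (x : Fin n ≃ X)
    (hX : IsGenericSpace X)
    (ρ : Fin n → Fin n → ℝ) (hsymm : ∀ i j : Fin n, ρ i j = ρ j i)
    (hρ : ∀ i j : Fin n, i ≠ j → |ρ i j - dist (x i) (x j) / 2| < deltaX X / 6) :
    (∀ i j : Fin n, i ≠ j → 0 < 2 * ρ i j) ∧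
    (∀ i j k : Fin n,
      (if i = k then 0 else 2 * ρ i k) ≤
        (if i = j then 0 else 2 * ρ i j) + (if j = k then 0 else 2 * ρ j k)) ∧
    ∃ m : MetricSpace (Fin n),
      (∀ i j : Fin n, @dist _ m.toDist i j = if i = j then 0 else 2 * ρ i j) ∧
      @GromovHausdorff.ghDist X (Fin n) _ _ _ m ⟨⟨0, by omega⟩⟩ _ < deltaX X / 6 := by
  have hxinj : Function.Injective x := x.injective
  -- positivity
  have pos : ∀ i j : Fin n, i ≠ j → 0 < 2 * ρ i j := by
    intro i j hij
    have hne : x i ≠ x j := fun h => hij (hxinj h)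
    have hd : 0 < dist (x i) (x j) := dist_pos.2 hne
    have h2 : deltaX X ≤ 2 * dist (x i) (x j) := deltaX_le_two_dist hne
    have h1 := hρ i j hij
    rw [abs_lt] at h1
    linarith
  -- triangle inequality for the candidate distance
  have tri : ∀ i j k : Fin n,
      (if i = k then (0 : ℝ) else 2 * ρ i k) ≤
        (if i = j then 0 else 2 * ρ i j) + (if j = k then 0 else 2 * ρ j k) := by
    intro i j k
    by_cases hik : i = k
    · subst hik
      rw [if_pos rfl]
      by_cases hij : i = j
      · subst hij; simp
      · rw [if_neg hij, if_neg (Ne.symm hij)]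
        have := pos i j hij
        have := pos j i (Ne.symm hij)
        linarith
    · rw [if_neg hik]
      by_cases hij : i = j
      · subst hij; simp [hik]
      · by_cases hjk : j = k
        · subst hjk; simp [hij]
        · rw [if_neg hij, if_neg hjk]
          have h1 := hρ i j hij
          have h2 := hρ j k hjk
          have h3 := hρ i k hik
          rw [abs_lt] at h1 h2 h3
          have hne1 : x i ≠ x j := fun h => hij (hxinj h)
          have hne2 : x j ≠ x k := fun h => hjk (hxinj h)
          have hne3 : x i ≠ x k := fun h => hik (hxinj h)
          have hdef : deltaX X ≤ dist (x i) (x j) + dist (x j) (x k) - dist (x i) (x k) :=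
            deltaX_le_defect hne1 hne2 hne3
          linarith
  have Dcomm : ∀ i j : Fin n,
      (if i = j then (0 : ℝ) else 2 * ρ i j) = (if j = i then 0 else 2 * ρ j i) := by
    intro i j
    by_cases h : i = j
    · subst h; simp
    · rw [if_neg h, if_neg (Ne.symm h), hsymm]
  have Deq : ∀ i j : Fin n, (if i = j then (0 : ℝ) else 2 * ρ i j) = 0 → i = j := by
    intro i j h
    by_contra hij
    rw [if_neg hij] at h
    exact absurd h (ne_of_gt (pos i j hij))
  refine ⟨pos, tri, ?_⟩
  letI m : MetricSpace (Fin n) :=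
    { dist := fun i j => if i = j then 0 else 2 * ρ i j
      dist_self := fun i => if_pos rfl
      dist_comm := fun i j => Dcomm i j
      dist_triangle := fun i j k => tri i j k
      eq_of_dist_eq_zero := fun {i j} h => Deq i j h }
  haveI : Nonempty (Fin n) := ⟨⟨0, by omega⟩⟩
  refine ⟨m, fun i j => rfl, ?_⟩
  -- finite sup of distortions
  have h01 : (⟨0, by omega⟩ : Fin n) ≠ ⟨1, by omega⟩ := by
    intro h
    have := congrArg Fin.val h
    simp at this
  set S : Finset (Fin n × Fin n) := Finset.univ.filter (fun p => p.1 ≠ p.2) with hS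
  have hSne : S.Nonempty :=
    ⟨(⟨0, by omega⟩, ⟨1, by omega⟩), Finset.mem_filter.2 ⟨Finset.mem_univ _, h01⟩⟩
  set f : Fin n × Fin n → ℝ := fun p => |dist (x p.1) (x p.2) - 2 * ρ p.1 p.2| with hf
  set c : ℝ := S.sup' hSne f with hc
  have hc0 : 0 ≤ c :=
    le_trans (abs_nonneg _) (Finset.le_sup' f hSne.choose_spec)
  have hclt : c < deltaX X / 3 := by
    rw [hc, Finset.sup'_lt_iff]
    intro p hp
    have hp' : p.1 ≠ p.2 := (Finset.mem_filter.1 hp).2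
    have h := hρ p.1 p.2 hp'
    rw [abs_lt] at h ⊢
    constructor <;> linarith [h.1, h.2]
  -- apply the approximation lemma
  set Φ : ↥(Set.univ : Set X) → Fin n := fun a => x.symm a.1 with hΦ
  have hs : ∀ xx : X, ∃ y ∈ (Set.univ : Set X), dist xx y ≤ (0 : ℝ) := fun xx =>
    ⟨xx, Set.mem_univ _, by simp⟩
  have hs' : ∀ j : Fin n, ∃ y : ↥(Set.univ : Set X), dist j (Φ y) ≤ (0 : ℝ) := by
    intro j
    refine ⟨⟨x j, Set.mem_univ _⟩, ?_⟩
    have hj : Φ ⟨x j, Set.mem_univ _⟩ = j := x.symm_apply_apply j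
    rw [hj]
    simp
  have H : ∀ a b : ↥(Set.univ : Set X), |dist a b - dist (Φ a) (Φ b)| ≤ c := by
    intro a b
    by_cases h : x.symm a.1 = x.symm b.1
    · have hab : a = b := Subtype.ext (x.symm.injective h)
      subst hab
      simp [hc0, hΦ]
    · have hd : dist (Φ a) (Φ b) = 2 * ρ (x.symm a.1) (x.symm b.1) := if_neg h
      have hmem : (x.symm a.1, x.symm b.1) ∈ S :=
        Finset.mem_filter.2 ⟨Finset.mem_univ _, h⟩
      have hle := Finset.le_sup' f hmem
      rw [hc]
      refine le_trans (le_of_eq ?_) hle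
      rw [hd, hf]
      simp [Subtype.dist_eq, x.apply_symm_apply]
  have main := GromovHausdorff.ghDist_le_of_approx_subsets Φ hs hs' H
  calc GromovHausdorff.ghDist X (Fin n) ≤ 0 + c / 2 + 0 := main
    _ < deltaX X / 6 := by linarith
end

section
/- Let X be a finite metric space with n ≥ 1 points, and let k be the least positive integer such that n ≤ k(k−1)/2. Then there exists an isometric embedding f of X into the Gromov–Hausdorff space (the space of isometry classes of nonempty compact metric spaces with the Gromov–Hausdorff distance) such that for every x ∈ X, the image f(x) is the isometry class of a metric space with exactly k points. -/
open GromovHausdorff Metric Set Function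
open scoped NNReal

/-!
Give the `k` points of `Fin k` the distances `d_x(i, j) = S (m + 1 + c{i,j}) + 2 g_x{i,j}`, where
`c` enumerates the `m` unordered pairs and the perturbation `g_x` takes values in `[0, B]` with
`S = 4B + 1`. All distances then lie in `[C, 2C]` (so the triangle inequality is automatic), and
the spacing `S` of the coarse term forces any map with distortion below `2B + 1` to fix every pair.
Hence the Gromov–Hausdorff distance of two such spaces is `sup |g_x - g_y|`. Since
`n ≤ k(k-1)/2`, every `w ∈ X` can own a pair `p w`; with `g_x (p w) = d(x, w)` the supremum is
`d(x, y)`, attained at the pair of `x`.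
-/

namespace GromovHausdorff

variable {X Y : Type*} [MetricSpace X] [CompactSpace X] [Nonempty X]
  [MetricSpace Y] [CompactSpace Y] [Nonempty Y]

theorem ghDist_le_of_surjective {Φ : X → Y} (hΦ : Surjective Φ) {ε : ℝ}
    (H : ∀ a a', |dist a a' - dist (Φ a) (Φ a')| ≤ ε) : ghDist X Y ≤ ε / 2 := by
  have := ghDist_le_of_approx_subsets (s := univ) (fun a => Φ a) (ε₁ := 0) (ε₃ := 0)
    (fun a => ⟨a, mem_univ a, by simp⟩)
    (fun b => ⟨⟨(hΦ b).choose, mem_univ _⟩, by simp [(hΦ b).choose_spec]⟩)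
    (fun a a' => H a a')
  linarith

theorem exists_abs_dist_sub_le_two_mul_ghDist :
    ∃ Φ : X → Y, ∀ a a', |dist a a' - dist (Φ a) (Φ a')| ≤ 2 * ghDist X Y := by
  set i := optimalGHInjl X Y
  set j := optimalGHInjr X Y
  have hi : Isometry i := isometry_optimalGHInjl X Y
  have hj : Isometry j := isometry_optimalGHInjr X Y
  have hjc : IsCompact (range j) := isCompact_range hj.continuous
  have near : ∀ a, ∃ b, dist (i a) (j b) ≤ ghDist X Y := by
    intro a
    obtain ⟨_, ⟨b, rfl⟩, hb⟩ := hjc.exists_infDist_eq_dist (range_nonempty j) (i a)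
    refine ⟨b, hb ▸ hausdorffDist_optimal (X := X) (Y := Y) ▸ ?_⟩
    exact infDist_le_hausdorffDist_of_mem (mem_range_self a) <|
      hausdorffEDist_ne_top_of_nonempty_of_bounded (range_nonempty i) (range_nonempty j)
        (isCompact_range hi.continuous).isBounded hjc.isBounded
  choose Φ hΦ using near
  refine ⟨Φ, fun a a' => ?_⟩
  rw [← hi.dist_eq, ← hj.dist_eq, ← Real.dist_eq]
  linarith [dist_dist_dist_le (i a) (i a') (j (Φ a)) (j (Φ a')), hΦ a, hΦ a']

theorem natCard_rep_toGHSpace (X : Type*) [MetricSpace X] [CompactSpace X] [Nonempty X] :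
    Nat.card (toGHSpace X).Rep = Nat.card X := by
  obtain ⟨e⟩ := toGHSpace_eq_toGHSpace_iff_isometryEquiv.1 (toGHSpace X).toGHSpace_rep
  exact Nat.card_congr e.toEquiv

end GromovHausdorff

abbrev MetricSpace.ofSym2Bounds {α : Type*} [DecidableEq α] (F : Sym2 α → ℝ) (C : ℝ)
    (hC : 0 < C) (hF : ∀ z, ¬z.IsDiag → F z ∈ Icc C (2 * C)) : MetricSpace α :=
  have bounds (a b : α) (h : a ≠ b) : C ≤ F s(a, b) ∧ F s(a, b) ≤ 2 * C :=
    hF _ (Sym2.mk_isDiag_iff.not.2 h)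
  have nonneg (a b : α) : 0 ≤ if a = b then 0 else F s(a, b) := by
    split_ifs with h
    exacts [le_rfl, hC.le.trans (bounds a b h).1]
  { dist i j := if i = j then 0 else F s(i, j)
    dist_self _ := if_pos rfl
    dist_comm i j := by simp only [eq_comm, Sym2.eq_swap]
    dist_triangle i j l := by
      by_cases hil : i = l
      · subst hil
        simpa using add_nonneg (nonneg i j) (nonneg j i)
      by_cases hij : i = j
      · subst hij; simp
      by_cases hjl : j = l
      · subst hjl; simp
      simp only [if_neg hil, if_neg hij, if_neg hjl]
      linarith [(bounds i l hil).2, (bounds i j hij).1, (bounds j l hjl).1]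
    eq_of_dist_eq_zero {i j} h := by
      by_contra hij
      simp only [if_neg hij] at h
      linarith [(bounds i j hij).1] }

theorem Nat.eq_of_abs_cast_sub_lt_one {a b : ℕ} (h : |(a : ℝ) - b| < 1) : a = b := by
  obtain ⟨h₁, h₂⟩ := abs_lt.1 h
  have : a < b + 1 := by exact_mod_cast (by linarith : (a : ℝ) < b + 1)
  have : b < a + 1 := by exact_mod_cast (by linarith : (b : ℝ) < a + 1)
  omega

/-- A copy of `ι`; the parameters only select the metric `pairDist g` it carries. -/
structure RigidPairSpace (ι : Type*) (B : ℝ≥0) (g : Sym2 ι → Icc (0 : ℝ) B) where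
  point : ι

namespace RigidPairSpace

variable {ι : Type*} {B : ℝ≥0}

theorem point_injective (g : Sym2 ι → Icc (0 : ℝ) B) :
    Injective (point : RigidPairSpace ι B g → ι) :=
  fun ⟨_⟩ ⟨_⟩ h => congrArg mk h

instance [Nonempty ι] (g : Sym2 ι → Icc (0 : ℝ) B) : Nonempty (RigidPairSpace ι B g) :=
  ⟨⟨Classical.arbitrary ι⟩⟩

instance [Finite ι] (g : Sym2 ι → Icc (0 : ℝ) B) : Finite (RigidPairSpace ι B g) :=
  .of_injective _ (point_injective g)

theorem natCard (g : Sym2 ι → Icc (0 : ℝ) B) :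
    Nat.card (RigidPairSpace ι B g) = Nat.card ι :=
  Nat.card_congr ⟨point, mk, fun _ => rfl, fun _ => rfl⟩

variable [Fintype ι]

noncomputable def pairDist (g : Sym2 ι → Icc (0 : ℝ) B) (z : Sym2 ι) : ℝ :=
  (4 * B + 1) * (Fintype.card (Sym2 ι) + 1 + (Fintype.equivFin (Sym2 ι) z : ℕ)) + 2 * g z

theorem pairDist_mem_Icc (g : Sym2 ι → Icc (0 : ℝ) B) (z : Sym2 ι) :
    pairDist g z ∈ Icc ((4 * B + 1) * (Fintype.card (Sym2 ι) + 1) : ℝ)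
      (2 * ((4 * B + 1) * (Fintype.card (Sym2 ι) + 1))) := by
  have hcode : ((Fintype.equivFin (Sym2 ι) z : ℕ) : ℝ) + 1 ≤ Fintype.card (Sym2 ι) := by
    exact_mod_cast (Fintype.equivFin (Sym2 ι) z).isLt
  have hg := (g z).2
  have hB := B.2
  constructor <;> unfold pairDist <;> nlinarith [hg.1, hg.2]

theorem pairDist_sub_pairDist (g g' : Sym2 ι → Icc (0 : ℝ) B) (z : Sym2 ι) :
    pairDist g z - pairDist g' z = 2 * ((g z : ℝ) - g' z) := by
  unfold pairDist; ring

theorem eq_of_abs_pairDist_sub_lt {g g' : Sym2 ι → Icc (0 : ℝ) B} {z z' : Sym2 ι}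
    (h : |pairDist g z - pairDist g' z'| < 2 * B + 1) : z = z' := by
  refine (Fintype.equivFin (Sym2 ι)).injective (Fin.ext (Nat.eq_of_abs_cast_sub_lt_one ?_))
  have hgg' : |(g z : ℝ) - g' z'| ≤ B :=
    abs_sub_le_of_nonneg_of_le (g z).2.1 (g z).2.2 (g' z').2.1 (g' z').2.2
  have hsplit : pairDist g z - pairDist g' z' = (4 * B + 1) *
      ((Fintype.equivFin (Sym2 ι) z : ℕ) - (Fintype.equivFin (Sym2 ι) z' : ℕ) : ℝ) +
      2 * ((g z : ℝ) - g' z') := by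
    unfold pairDist; ring
  rw [hsplit] at h
  obtain ⟨h₁, h₂⟩ := abs_lt.1 h
  obtain ⟨hd₁, hd₂⟩ := abs_le.1 hgg'
  have hB := B.2
  rw [abs_lt]
  constructor <;> by_contra! hc <;> nlinarith

variable [DecidableEq ι]

noncomputable instance (g : Sym2 ι → Icc (0 : ℝ) B) : MetricSpace (RigidPairSpace ι B g) :=
  .induced point (point_injective g) <|
    .ofSym2Bounds (pairDist g) _ (by positivity) fun z _ => pairDist_mem_Icc g z

theorem dist_eq (g : Sym2 ι → Icc (0 : ℝ) B) (a b : RigidPairSpace ι B g) :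
    dist a b = if a.point = b.point then 0 else pairDist g s(a.point, b.point) :=
  rfl

variable {g g' : Sym2 ι → Icc (0 : ℝ) B}

-- Distances are at least `4B + 1 > δ`, so `Φ` is injective; then `δ` is below the spacing of the
-- coarse term, which therefore has to agree at `{a, b}` and `{Φ a, Φ b}`.
theorem map_pair_eq_of_distortion_lt {Φ : RigidPairSpace ι B g → RigidPairSpace ι B g'}
    {δ : ℝ} (hδ : δ < 2 * B + 1) (hΦ : ∀ a b, |dist a b - dist (Φ a) (Φ b)| ≤ δ)
    {a b : RigidPairSpace ι B g} (hab : a.point ≠ b.point) :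
    (Φ a).point ≠ (Φ b).point ∧ s((Φ a).point, (Φ b).point) = s(a.point, b.point) := by
  have hlarge := (pairDist_mem_Icc g s(a.point, b.point)).1
  have hC : (4 * B + 1 : ℝ) ≤ (4 * B + 1) * (Fintype.card (Sym2 ι) + 1) := by
    have := B.2; nlinarith
  have hΦab := hΦ a b
  rw [dist_eq, dist_eq, if_neg hab] at hΦab
  have hne : (Φ a).point ≠ (Φ b).point := by
    intro heq
    rw [if_pos heq, sub_zero, abs_of_nonneg (by linarith)] at hΦab
    linarith
  rw [if_neg hne] at hΦab
  exact ⟨hne, (eq_of_abs_pairDist_sub_lt (hΦab.trans_lt hδ)).symm⟩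

variable [Nonempty ι]

theorem ghDist_le {ε : ℝ} (h : ∀ z, |(g z : ℝ) - g' z| ≤ ε) :
    ghDist (RigidPairSpace ι B g) (RigidPairSpace ι B g') ≤ ε := by
  have hε : 0 ≤ ε := (abs_nonneg _).trans (h s(Classical.arbitrary ι, Classical.arbitrary ι))
  have := ghDist_le_of_surjective (Y := RigidPairSpace ι B g')
    (Φ := fun a : RigidPairSpace ι B g => ⟨a.point⟩) (fun b => ⟨⟨b.point⟩, rfl⟩)
    (ε := 2 * ε) fun a b => by
      rw [dist_eq, dist_eq]
      split_ifs
      · simpa using hε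
      · rw [pairDist_sub_pairDist, abs_mul, abs_two]
        linarith [h s(a.point, b.point)]
  linarith

theorem abs_sub_le_ghDist {z : Sym2 ι} (hz : ¬z.IsDiag) :
    |(g z : ℝ) - g' z| ≤ ghDist (RigidPairSpace ι B g) (RigidPairSpace ι B g') := by
  set γ := ghDist (RigidPairSpace ι B g) (RigidPairSpace ι B g')
  by_cases hγ : (B : ℝ) ≤ γ
  · exact (abs_sub_le_of_nonneg_of_le (g z).2.1 (g z).2.2 (g' z).2.1 (g' z).2.2).trans hγ
  obtain ⟨Φ, hΦ⟩ := exists_abs_dist_sub_le_two_mul_ghDist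
    (X := RigidPairSpace ι B g) (Y := RigidPairSpace ι B g')
  induction z using Sym2.ind with
  | h i j =>
    have hij : i ≠ j := Sym2.mk_isDiag_iff.not.1 hz
    obtain ⟨hne, hfix⟩ :=
      map_pair_eq_of_distortion_lt (by linarith) hΦ (a := ⟨i⟩) (b := ⟨j⟩) hij
    have hΦij := hΦ ⟨i⟩ ⟨j⟩
    rw [dist_eq, dist_eq, if_neg hij, if_neg hne, hfix, pairDist_sub_pairDist, abs_mul,
      abs_two] at hΦij
    linarith

end RigidPairSpace

section DistProfile

variable {X β : Type*} [PseudoMetricSpace X] {B : ℝ≥0} (hB : ∀ x y : X, dist x y ≤ B)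

noncomputable def distProfile (p : X → β) (x : X) : β → Icc (0 : ℝ) B :=
  extend p (fun w => ⟨dist x w, dist_nonneg, hB x w⟩) fun _ => ⟨0, le_rfl, B.2⟩

variable {p : X → β}

theorem distProfile_apply (hp : Injective p) (x w : X) :
    (distProfile hB p x (p w) : ℝ) = dist x w := by
  simp [distProfile, hp.extend_apply]

theorem abs_distProfile_sub_le (hp : Injective p) (x y : X) (b : β) :
    |(distProfile hB p x b : ℝ) - distProfile hB p y b| ≤ dist x y := by
  by_cases hb : ∃ w, p w = b
  · obtain ⟨w, rfl⟩ := hb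
    rw [distProfile_apply hB hp, distProfile_apply hB hp]
    exact abs_dist_sub_le x y w
  · simp [distProfile, extend_apply' _ _ _ hb]

end DistProfile

theorem isometric_embedding_into_GHSpace_with_k_points_general
    (X : Type) [MetricSpace X] [Fintype X]
    (k : ℕ) (hk : 0 < k) (hnk : 2 * Fintype.card X ≤ k * (k - 1)) :
    ∃ f : X → GromovHausdorff.GHSpace,
      (∀ x x' : X, dist (f x) (f x') = dist x x') ∧
      (∀ x : X, Nat.card (f x).Rep = k) := by
  have : Nonempty (Fin k) := ⟨⟨0, hk⟩⟩
  obtain ⟨p⟩ : Nonempty (X ↪ {z : Sym2 (Fin k) // ¬z.IsDiag}) := by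
    refine Function.Embedding.nonempty_of_card_le ?_
    rw [Sym2.card_subtype_not_diag, Fintype.card_fin, Nat.choose_two_right]
    exact (Nat.le_div_iff_mul_le two_pos).2 (by linarith)
  have hp : Injective fun x => (p x).1 := Subtype.val_injective.comp p.injective
  obtain ⟨B, hB⟩ : ∃ B : ℝ≥0, ∀ x y : X, dist x y ≤ B :=
    ⟨⟨diam univ, diam_nonneg⟩, fun x y =>
      dist_le_diam_of_mem (toFinite univ).isBounded (mem_univ x) (mem_univ y)⟩
  let g := distProfile hB fun x => (p x).1
  refine ⟨fun x => toGHSpace (RigidPairSpace (Fin k) B (g x)), fun x y => le_antisymm ?_ ?_,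
    fun x => ?_⟩
  · exact RigidPairSpace.ghDist_le (abs_distProfile_sub_le hB hp x y)
  · have := RigidPairSpace.abs_sub_le_ghDist (g := g x) (g' := g y) (p x).2
    rwa [distProfile_apply hB hp, distProfile_apply hB hp, dist_self, zero_sub, abs_neg,
      abs_of_nonneg dist_nonneg, dist_comm] at this
  · rw [natCard_rep_toGHSpace, RigidPairSpace.natCard, Nat.card_fin]

/-- Every finite metric space with `n ≥ 1` points embeds isometrically into the
Gromov–Hausdorff space so that every point of the image is the isometry class of a
metric space with exactly `k` points, where `k` is the least positive integer with
`n ≤ k(k−1)/2`. -/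
theorem isometric_embedding_into_GHSpace_with_k_points
    (X : Type) [MetricSpace X] [Fintype X] (hn : 1 ≤ Fintype.card X)
    (k : ℕ) (hk : 0 < k) (hnk : 2 * Fintype.card X ≤ k * (k - 1))
    (hleast : ∀ m : ℕ, 0 < m → 2 * Fintype.card X ≤ m * (m - 1) → k ≤ m) :
    ∃ f : X → GromovHausdorff.GHSpace,
      (∀ x x' : X, dist (f x) (f x') = dist x x') ∧
      (∀ x : X, Nat.card (f x).Rep = k) :=
  isometric_embedding_into_GHSpace_with_k_points_general X k hk hnk
end

section
/- The generic finite metric spaces are everywhere dense in the Gromov–Hausdorff space: for every nonempty compact metric space X and every ε > 0 there exists a finite generic metric space Y with d_GH(X,Y) < ε. -/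
open scoped Classical

lemma aux_m_lt (n : ℕ) (i j : Fin n) :
    n * min (i:ℕ) (j:ℕ) + max (i:ℕ) (j:ℕ) < n * n := by
  have hi := i.isLt; have hj := j.isLt
  have h1 : n * min (i:ℕ) (j:ℕ) + max (i:ℕ) (j:ℕ) < n * min (i:ℕ) (j:ℕ) + n := by omega
  have h2 : n * min (i:ℕ) (j:ℕ) + n = n * (min (i:ℕ) (j:ℕ) + 1) := by ring
  have h3 : n * (min (i:ℕ) (j:ℕ) + 1) ≤ n * n := Nat.mul_le_mul_left _ (by omega)
  omega

lemma aux_m_inj (n : ℕ) (hnpos : 0 < n) (i j p q : Fin n)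
    (hmeq : n * min (i:ℕ) (j:ℕ) + max (i:ℕ) (j:ℕ) = n * min (p:ℕ) (q:ℕ) + max (p:ℕ) (q:ℕ)) :
    ({i, j} : Set (Fin n)) = {p, q} := by
  have hi := i.isLt; have hj := j.isLt; have hp := p.isLt; have hq := q.isLt
  have hij : max (i:ℕ) (j:ℕ) < n := by omega
  have hpq : max (p:ℕ) (q:ℕ) < n := by omega
  have hmax : max (i:ℕ) (j:ℕ) = max (p:ℕ) (q:ℕ) := by
    have h0 := congrArg (· % n) hmeq
    simp only [Nat.mul_add_mod] at h0
    rwa [Nat.mod_eq_of_lt hij, Nat.mod_eq_of_lt hpq] at h0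
  have hmin : min (i:ℕ) (j:ℕ) = min (p:ℕ) (q:ℕ) :=
    Nat.eq_of_mul_eq_mul_left hnpos (by omega)
  have hval : ((i:ℕ) = p ∧ (j:ℕ) = q) ∨ ((i:ℕ) = q ∧ (j:ℕ) = p) := by omega
  rcases hval with ⟨h1, h2⟩ | ⟨h1, h2⟩
  · rw [Fin.val_injective h1, Fin.val_injective h2]
  · rw [Fin.val_injective h1, Fin.val_injective h2, Set.pair_comm]

/-- The generic finite metric spaces are everywhere dense in the Gromov–Hausdorff space:
every nonempty compact metric space can be approximated arbitrarily well by a finite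
generic metric space. -/
theorem generic_spaces_dense
    (X : Type) [MetricSpace X] [CompactSpace X] [Nonempty X]
    (ε : ℝ) (hε : 0 < ε) :
    ∃ (Y : Type) (_ : MetricSpace Y) (_ : Fintype Y) (_ : Nonempty Y),
      IsGenericSpace Y ∧ GromovHausdorff.ghDist X Y < ε := by
  have hε4 : (0:ℝ) < ε/4 := by linarith
  obtain ⟨t, -, htfin, htcov⟩ :=
    finite_cover_balls_of_compact (isCompact_univ (X := X)) hε4
  have hnet : ∀ x : X, ∃ y ∈ t, dist x y ≤ ε/4 := by
    intro x
    obtain ⟨y, hy, hxy⟩ := Set.mem_iUnion₂.1 (htcov (Set.mem_univ x))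
    exact ⟨y, hy, (Metric.mem_ball.1 hxy).le⟩
  haveI : Fintype t := htfin.fintype
  haveI htne : Nonempty t := by
    obtain ⟨y, hy, -⟩ := hnet (Classical.arbitrary X)
    exact ⟨⟨y, hy⟩⟩
  set n := Fintype.card t with hn
  have hnpos : 0 < n := Fintype.card_pos
  haveI : Nonempty (Fin n) := ⟨⟨0, hnpos⟩⟩
  set e : Fin n ≃ t := (Fintype.equivFin t).symm with he
  set D0 : Fin n → Fin n → ℝ := fun i j => dist (e i : X) (e j : X) with hD0
  have hD0comm : ∀ i j, D0 i j = D0 j i := fun i j => dist_comm _ _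
  have hD0nonneg : ∀ i j, 0 ≤ D0 i j := fun i j => dist_nonneg
  have hD0tri : ∀ i j k, D0 i k ≤ D0 i j + D0 j k := fun i j k => dist_triangle _ _ _
  -- pair encoding
  set m : Fin n → Fin n → ℕ := fun i j => n * (min (i:ℕ) (j:ℕ)) + max (i:ℕ) (j:ℕ) with hm
  have hm_comm : ∀ i j, m i j = m j i := by
    intro i j; simp [hm, min_comm, max_comm]
  have hm_lt : ∀ i j, m i j < n * n := fun i j => aux_m_lt n i j
  have hm_inj : ∀ i j p q : Fin n, m i j = m p q → ({i, j} : Set (Fin n)) = {p, q} :=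
    fun i j p q hmeq => aux_m_inj n hnpos i j p q hmeq
  -- choose the generic constant c
  set a : ℝ := ε/4 with ha
  have hapos : 0 < a := hε4
  have hn2 : (0:ℝ) < (n*n : ℕ) := by
    have : 0 < n * n := Nat.mul_pos hnpos hnpos
    exact_mod_cast this
  set F : Fin n × Fin n × Fin n × Fin n → ℝ :=
    fun x => (D0 x.2.2.1 x.2.2.2 - D0 x.1 x.2.1) / ((m x.1 x.2.1 : ℝ) - (m x.2.2.1 x.2.2.2 : ℝ))
    with hF
  obtain ⟨c, hcmem, hcbad⟩ :
      ∃ c, c ∈ Set.Ioo (0:ℝ) (a / (n*n : ℕ)) ∧ c ∉ Set.range F := by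
    have hIoo : (Set.Ioo (0:ℝ) (a / (n*n : ℕ))).Infinite :=
      Set.Ioo_infinite (by positivity)
    obtain ⟨c, hc⟩ := (hIoo.diff (Set.finite_range F)).nonempty
    exact ⟨c, hc.1, hc.2⟩
  obtain ⟨hcpos, hclt⟩ := hcmem
  have hcm : ∀ i j, c * (m i j : ℝ) < a := by
    intro i j
    calc c * (m i j : ℝ) ≤ c * (n*n : ℕ) := by
          apply mul_le_mul_of_nonneg_left _ hcpos.le
          exact_mod_cast (hm_lt i j).le
      _ < (a / (n*n : ℕ)) * (n*n : ℕ) := by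
          exact mul_lt_mul_of_pos_right hclt hn2
      _ = a := div_mul_cancel₀ _ (ne_of_gt hn2)
  have hcmnonneg : ∀ i j, 0 ≤ c * (m i j : ℝ) := fun i j => by positivity
  -- key: distinct pair values
  have hkey : ∀ i j p q : Fin n, D0 i j + c * m i j = D0 p q + c * m p q →
      ({i, j} : Set (Fin n)) = {p, q} := by
    intro i j p q heq
    by_cases hmpq : m i j = m p q
    · exact hm_inj i j p q hmpq
    · exfalso
      apply hcbad
      refine ⟨(i, j, p, q), ?_⟩
      have hmne : (m i j : ℝ) ≠ (m p q : ℝ) := by exact_mod_cast hmpq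
      have : c * ((m i j : ℝ) - (m p q : ℝ)) = D0 p q - D0 i j := by ring_nf; linarith [heq]
      simp only [hF]
      field_simp [sub_ne_zero.mpr hmne]
      linarith [this]
  -- the perturbed distance
  set D : Fin n → Fin n → ℝ :=
    fun i j => if i = j then 0 else D0 i j + a + c * m i j with hD
  have hDval : ∀ i j, i ≠ j → D i j = D0 i j + a + c * m i j := by
    intro i j hij; simp [hD, hij]
  have hDpos : ∀ i j, i ≠ j → 0 < D i j := by
    intro i j hij
    rw [hDval i j hij]
    have := hD0nonneg i j; have := hcmnonneg i j
    linarith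
  have hDself : ∀ i, D i i = 0 := fun i => by simp [hD]
  have hDcomm : ∀ i j, D i j = D j i := by
    intro i j
    by_cases hij : i = j
    · subst hij; rfl
    · rw [hDval i j hij, hDval j i (Ne.symm hij), hD0comm, hm_comm]
  have hDtri_strict : ∀ i j k, i ≠ j → j ≠ k → i ≠ k → D i k < D i j + D j k := by
    intro i j k hij hjk hik
    rw [hDval i k hik, hDval i j hij, hDval j k hjk]
    have h1 := hD0tri i j k
    have h2 := hcm i k
    have h3 := hcmnonneg i j
    have h4 := hcmnonneg j k
    linarith
  have hDtri : ∀ i j k, D i k ≤ D i j + D j k := by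
    intro i j k
    by_cases hik : i = k
    · subst hik
      rw [hDself]
      by_cases hij : i = j
      · subst hij; rw [hDself]; norm_num
      · have := hDpos i j hij
        have := hDpos j i (Ne.symm hij)
        linarith
    · by_cases hij : i = j
      · subst hij; rw [hDself]; linarith
      · by_cases hjk : j = k
        · subst hjk; rw [hDself]; linarith
        · exact (hDtri_strict i j k hij hjk hik).le
  letI instY : MetricSpace (Fin n) :=
    { dist := D
      dist_self := hDself
      dist_comm := hDcomm
      dist_triangle := hDtri
      eq_of_dist_eq_zero := by
        intro x y h
        by_contra hxy
        exact absurd h (ne_of_gt (hDpos x y hxy)) }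
  have hdist_def : ∀ i j : Fin n, dist i j = D i j := fun i j => rfl
  refine ⟨Fin n, instY, inferInstance, inferInstance, ⟨?_, ?_⟩, ?_⟩
  · -- distinct distances
    intro x y z w hxy hzw hd
    rw [hdist_def, hdist_def, hDval x y hxy, hDval z w hzw] at hd
    exact hkey x y z w (by linarith)
  · -- strict triangle
    intro x y z hxy hyz hxz
    rw [hdist_def, hdist_def, hdist_def]
    exact hDtri_strict x y z hxy hyz hxz
  · -- GH distance bound
    set Φ : t → Fin n := fun y => e.symm y with hΦ
    have hΦe : ∀ i : Fin n, Φ (e i) = i := fun i => e.symm_apply_apply i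
    have bound : GromovHausdorff.ghDist X (Fin n) ≤ ε/4 + (ε/2)/2 + 0 := by
      apply GromovHausdorff.ghDist_le_of_approx_subsets Φ hnet
      · intro x
        refine ⟨e x, ?_⟩
        rw [hΦe]
        simp [hdist_def, hDself]
      · intro x y
        have hxy : dist x y = D0 (e.symm x) (e.symm y) := by
          simp only [hD0, e.apply_symm_apply]
          exact Subtype.dist_eq x y
        by_cases hsym : e.symm x = e.symm y
        · have hxy2 : x = y := e.symm.injective hsym
          subst hxy2
          simp [hdist_def, hDself, hsym, dist_self]
          linarith
        · rw [hxy, hdist_def, hDval _ _ hsym]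
          have h1 := hcm (e.symm x) (e.symm y)
          have h2 := hcmnonneg (e.symm x) (e.symm y)
          rw [abs_sub_comm, abs_of_nonneg (by linarith)]
          simp only [ha] at h1 ⊢
          linarith
    calc GromovHausdorff.ghDist X (Fin n) ≤ ε/4 + (ε/2)/2 + 0 := bound
      _ < ε := by linarith
end
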